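/- arXiv:2212.12107 — 8 statements merged into one kernel-verified Lean document; each statement's English description precedes it below -/
import Mathlib

section
/- For every integer h ≥ 2, the Arslan numerical semigroup Γ_{A_h} is homogeneous; that is, for every nonzero element x of the Apéry set Ap(Γ_{A_h}, a₁), any two representations x = z₁a₁ + z₂a₂ + z₃a₃ + z₄a₄ = w₁a₁ + w₂a₂ + w₃a₃ + w₄a₄ with z₁,…,z₄, w₁,…,w₄ ∈ ℕ satisfy z₁+z₂+z₃+z₄ = w₁+w₂+w₃+w₄. -/
set_option maxHeartbeats 1000000

/-- For every integer `h ≥ 2`, the Arslan numerical semigroup `Γ_{A_h}` is homogeneous: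
any two representations of a nonzero element of the Apéry set `Ap(Γ_{A_h}, a₁)` in terms of
the generators have the same total length. -/
theorem arslan_homogeneous (h : ℕ) (hh : 2 ≤ h)
    (a1 a2 a3 a4 : ℕ)
    (ha1 : a1 = h * (h + 1)) (ha2 : a2 = h * (h + 1) + 1)
    (ha3 : a3 = (h + 1) ^ 2) (ha4 : a4 = (h + 1) ^ 2 + 1)
    (Γ : Set ℕ)
    (hΓ : Γ = {x | ∃ z1 z2 z3 z4 : ℕ, x = z1 * a1 + z2 * a2 + z3 * a3 + z4 * a4})
    (x : ℕ) (hxne : x ≠ 0) (hxΓ : x ∈ Γ)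
    (hxAp : ¬ ∃ y ∈ Γ, (x : ℤ) - (a1 : ℤ) = (y : ℤ))
    (z1 z2 z3 z4 w1 w2 w3 w4 : ℕ)
    (hz : x = z1 * a1 + z2 * a2 + z3 * a3 + z4 * a4)
    (hw : x = w1 * a1 + w2 * a2 + w3 * a3 + w4 * a4) :
    z1 + z2 + z3 + z4 = w1 + w2 + w3 + w4 := by
  subst ha1 ha2 ha3 ha4 hΓ
  obtain ⟨g, rfl⟩ : ∃ g, h = g + 2 := ⟨h - 2, by omega⟩
  -- trade lemma: if x = a1 + (element of Γ), contradiction with Apéry condition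
  have trade : ∀ y1 y2 y3 y4 : ℕ,
      (x : ℤ) = ((g:ℤ)+2)*((g:ℤ)+3)
        + ((y1:ℤ) * (((g:ℤ)+2)*((g:ℤ)+3)) + (y2:ℤ) * (((g:ℤ)+2)*((g:ℤ)+3)+1)
          + (y3:ℤ) * (((g:ℤ)+3)^2) + (y4:ℤ) * (((g:ℤ)+3)^2+1)) → False := by
    intro y1 y2 y3 y4 hy
    apply hxAp
    refine ⟨y1 * ((g+2) * (g+2+1)) + y2 * ((g+2) * (g+2+1) + 1)
        + y3 * ((g+2+1)^2) + y4 * ((g+2+1)^2 + 1), ⟨y1, y2, y3, y4, rfl⟩, ?_⟩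
    push_cast
    linear_combination hy
  have key : ∀ b1 b2 b3 b4 : ℕ,
      x = b1 * ((g+2) * (g+2+1)) + b2 * ((g+2) * (g+2+1) + 1)
        + b3 * ((g+2+1)^2) + b4 * ((g+2+1)^2 + 1) →
      b1 = 0 ∧ b2 + (g+3)*b3 + (g+4)*b4 < (g+2)*(g+3) := by
    intro b1 b2 b3 b4 hb
    have hb1 : b1 = 0 := by
      by_contra hb1
      obtain ⟨k, rfl⟩ : ∃ k, b1 = k + 1 := ⟨b1 - 1, by omega⟩
      have hbZ := congrArg (fun t : ℕ => (t:ℤ)) hb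
      push_cast at hbZ
      exact trade k b2 b3 b4 (by push_cast; linear_combination hbZ)
    have h23 : b2 = 0 ∨ b3 = 0 := by
      by_contra hc
      push_neg at hc
      obtain ⟨k, rfl⟩ : ∃ k, b2 = k + 1 := ⟨b2 - 1, by omega⟩
      obtain ⟨l, rfl⟩ : ∃ l, b3 = l + 1 := ⟨b3 - 1, by omega⟩
      have hbZ := congrArg (fun t : ℕ => (t:ℤ)) hb
      push_cast at hbZ
      exact trade b1 k l (b4+1) (by push_cast; linear_combination hbZ)
    have h2 : b2 ≤ g + 2 := by
      by_contra hc
      obtain ⟨k, rfl⟩ : ∃ k, b2 = k + (g+3) := ⟨b2 - (g+3), by omega⟩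
      have hbZ := congrArg (fun t : ℕ => (t:ℤ)) hb
      push_cast at hbZ
      exact trade (b1 + (g+1)) k (b3+1) b4 (by push_cast; linear_combination hbZ)
    have h3 : b3 ≤ g + 1 := by
      by_contra hc
      obtain ⟨k, rfl⟩ : ∃ k, b3 = k + (g+2) := ⟨b3 - (g+2), by omega⟩
      have hbZ := congrArg (fun t : ℕ => (t:ℤ)) hb
      push_cast at hbZ
      exact trade (b1 + (g+2)) b2 k b4 (by push_cast; linear_combination hbZ)
    have h34 : b3 + b4 ≤ g + 1 := by
      by_contra hc
      obtain ⟨j, hj, hjb⟩ : ∃ j, b3 + j = g + 2 ∧ j ≤ b4 := ⟨g + 2 - b3, by omega, by omega⟩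
      obtain ⟨d, rfl⟩ : ∃ d, b4 = j + d := ⟨b4 - j, by omega⟩
      have hbZ := congrArg (fun t : ℕ => (t:ℤ)) hb
      push_cast at hbZ
      have hjZ : (b3:ℤ) + (j:ℤ) = (g:ℤ) + 2 := by exact_mod_cast hj
      exact trade (b1 + b3) (b2 + j) 0 d
        (by push_cast; linear_combination hbZ + ((g:ℤ)+3) * hjZ)
    have h24 : b2 ≤ 1 ∨ b4 ≤ g := by
      by_contra hc
      push_neg at hc
      obtain ⟨k, rfl⟩ : ∃ k, b2 = k + 2 := ⟨b2 - 2, by omega⟩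
      obtain ⟨l, rfl⟩ : ∃ l, b4 = l + (g+1) := ⟨b4 - (g+1), by omega⟩
      have hbZ := congrArg (fun t : ℕ => (t:ℤ)) hb
      push_cast at hbZ
      exact trade (b1 + (g+3)) k b3 l (by push_cast; linear_combination hbZ)
    refine ⟨hb1, ?_⟩
    rcases h23 with h20 | h30
    · rw [h20]
      have e1 : (g+3)*b3 ≤ (g+4)*b3 := Nat.mul_le_mul_right _ (by omega)
      have e2 : (g+4)*b3 + (g+4)*b4 = (g+4)*(b3+b4) := by ring
      have e3 : (g+4)*(b3+b4) ≤ (g+4)*(g+1) := Nat.mul_le_mul_left _ h34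
      have e4 : (g+4)*(g+1) + 2 = (g+2)*(g+3) := by ring
      linarith
    · rw [h30]
      rcases h24 with hb2 | hb4
      · have hb4' : b4 ≤ g + 1 := by omega
        have e3 : (g+4)*b4 ≤ (g+4)*(g+1) := Nat.mul_le_mul_left _ hb4'
        have e4 : (g+4)*(g+1) + 2 = (g+2)*(g+3) := by ring
        linarith
      · have e3 : (g+4)*b4 ≤ (g+4)*g := Nat.mul_le_mul_left _ hb4
        have e4 : (g+4)*g + (g+6) = (g+2)*(g+3) := by ring
        linarith
  obtain ⟨hz1, hrz⟩ := key z1 z2 z3 z4 hz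
  obtain ⟨hw1, hrw⟩ := key w1 w2 w3 w4 hw
  subst hz1 hw1
  have hxz : x = (z2+z3+z4) * ((g+2)*(g+3)) + (z2 + (g+3)*z3 + (g+4)*z4) := by
    rw [hz]; ring
  have hxw : x = (w2+w3+w4) * ((g+2)*(g+3)) + (w2 + (g+3)*w3 + (g+4)*w4) := by
    rw [hw]; ring
  have hdiv : ∀ n r : ℕ, r < (g+2)*(g+3) → x = n * ((g+2)*(g+3)) + r →
      n = x / ((g+2)*(g+3)) := by
    intro n r hr hxe
    rw [hxe, Nat.add_comm, Nat.add_mul_div_right _ _ (by positivity), Nat.div_eq_of_lt hr,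
      Nat.zero_add]
  have e1 := hdiv _ _ hrz hxz
  have e2 := hdiv _ _ hrw hxw
  omega
end

section
/- For every integer h ≥ 2, the Apéry set of the Arslan semigroup Γ_{A_h} with respect to a₁ = h(h+1) is exactly the set Ap(Γ_{A_h}, a₁) = {i·a₂ : 0 ≤ i ≤ h} ∪ {j·a₃ : 1 ≤ j ≤ h−1} ∪ {l·a₄ : 1 ≤ l ≤ h−1} ∪ {γ·a₂ + ν·a₄ : γ ≥ 1, ν ≥ 1, 2 ≤ γ+ν ≤ h} ∪ {α·a₃ + β·a₄ : α ≥ 1, β ≥ 1, 2 ≤ α+β ≤ h−1}. -/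
/-- The explicit Apéry-set description for the Arslan semigroup. -/
def arsSet (h : ℕ) : Set ℕ :=
  {x | ∃ i, i ≤ h ∧ x = i * (h * (h + 1) + 1)} ∪
  {x | ∃ j, 1 ≤ j ∧ j ≤ h - 1 ∧ x = j * (h + 1) ^ 2} ∪
  {x | ∃ l, 1 ≤ l ∧ l ≤ h - 1 ∧ x = l * ((h + 1) ^ 2 + 1)} ∪
  {x | ∃ γ ν, 1 ≤ γ ∧ 1 ≤ ν ∧ 2 ≤ γ + ν ∧ γ + ν ≤ h ∧
      x = γ * (h * (h + 1) + 1) + ν * ((h + 1) ^ 2 + 1)} ∪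
  {x | ∃ α β, 1 ≤ α ∧ 1 ≤ β ∧ 2 ≤ α + β ∧ α + β ≤ h - 1 ∧
      x = α * (h + 1) ^ 2 + β * ((h + 1) ^ 2 + 1)}

/-- Key bound: any nonnegative combination `z2 + z3(h+1) + z4(h+2)` that decomposes as
`k·h(h+1) + q(h+1) + r0` with `q(h+1)+r0 < h(h+1)` and `r0 < h+1` satisfies that both
`q` and `r0` are at most `z2+z3+z4+k`. -/
lemma ars_key (h z2 z3 z4 k ρ q r0 : ℕ) (hh : 2 ≤ h)
    (hr : z2 + z3*(h+1) + z4*(h+2) = k * (h*(h+1)) + ρ) (hρ : ρ < h*(h+1))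
    (hqr : ρ = q*(h+1) + r0) (hr0 : r0 < h+1) :
    q ≤ z2+z3+z4 + k ∧ r0 ≤ z2+z3+z4 + k := by
  constructor
  · rcases le_or_gt (z2+z3+z4) h with hs | hs
    · have hr2 : ρ < (z2+z3+z4+k+1)*(h+1) := by nlinarith
      by_contra hcon
      push_neg at hcon
      have : (z2+z3+z4+k+1)*(h+1) ≤ q*(h+1) := Nat.mul_le_mul_right _ (by omega)
      omega
    · by_contra hcon
      push_neg at hcon
      have h1 : h*(h+1) ≤ q*(h+1) := Nat.mul_le_mul_right _ (by omega)
      omega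
  · have e1 : (z2+z4) + (z3+z4)*(h+1) = r0 + (k*h+q)*(h+1) := by
      have : q*(h+1) = q*(h+1) := rfl
      nlinarith [hr, hqr]
    have e2 := Nat.add_mul_mod_self_right (z2+z4) (z3+z4) (h+1)
    have e3 := Nat.add_mul_mod_self_right r0 (k*h+q) (h+1)
    have e4 := Nat.mod_le (z2+z4) (h+1)
    have e5 : r0 % (h+1) = r0 := Nat.mod_eq_of_lt hr0
    rw [e1] at e2
    omega

/-- The canonical element of residue class `q(h+1)+r0` lies in the Apéry description. -/
lemma ars_mem (h q r0 : ℕ) (hh : 2 ≤ h) (hq : q < h) (hr0 : r0 ≤ h) :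
    max q r0 * (h * (h + 1)) + (q * (h + 1) + r0) ∈ arsSet h := by
  rcases Nat.eq_zero_or_pos q with hq0 | hq1
  · subst hq0
    refine Or.inl (Or.inl (Or.inl (Or.inl ⟨r0, hr0, ?_⟩)))
    have e : max 0 r0 = r0 := by omega
    rw [e]; ring
  rcases Nat.eq_zero_or_pos r0 with hr00 | hr01
  · subst hr00
    refine Or.inl (Or.inl (Or.inl (Or.inr ⟨q, hq1, by omega, ?_⟩)))
    have e : max q 0 = q := by omega
    rw [e]; ring
  rcases lt_trichotomy q r0 with hlt | heq | hgt
  · obtain ⟨γ, hγ⟩ : ∃ γ, r0 = q + γ := ⟨r0 - q, by omega⟩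
    refine Or.inl (Or.inr ⟨γ, q, by omega, hq1, by omega, by omega, ?_⟩)
    have e : max q r0 = r0 := by omega
    rw [e, hγ]; ring
  · subst heq
    refine Or.inl (Or.inl (Or.inr ⟨q, hq1, by omega, ?_⟩))
    have e : max q q = q := by omega
    rw [e]; ring
  · obtain ⟨α, hα⟩ : ∃ α, q = r0 + α := ⟨q - r0, by omega⟩
    refine Or.inr ⟨α, r0, by omega, hr01, by omega, by omega, ?_⟩
    have e : max q r0 = q := by omega
    rw [e, hα]; ring

/-- Every element of the Apéry description has the canonical form. -/
lemma ars_form (h : ℕ) (hh : 2 ≤ h) {x : ℕ} (hx : x ∈ arsSet h) :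
    ∃ q r0, q < h ∧ r0 ≤ h ∧ x = max q r0 * (h * (h + 1)) + (q * (h + 1) + r0) := by
  rcases hx with (((⟨i, hi, rfl⟩ | ⟨j, hj1, hj2, rfl⟩) | ⟨l, hl1, hl2, rfl⟩) |
      ⟨γ, ν, hγ, hν, _, hγν, rfl⟩) | ⟨α, β, hα, hβ, _, hαβ, rfl⟩
  · refine ⟨0, i, by omega, hi, ?_⟩
    have e : max 0 i = i := by omega
    rw [e]; ring
  · refine ⟨j, 0, by omega, by omega, ?_⟩
    have e : max j 0 = j := by omega
    rw [e]; ring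
  · refine ⟨l, l, by omega, by omega, ?_⟩
    have e : max l l = l := by omega
    rw [e]; ring
  · refine ⟨ν, γ + ν, by omega, by omega, ?_⟩
    have e : max ν (γ+ν) = γ+ν := by omega
    rw [e]; ring
  · refine ⟨α + β, β, by omega, by omega, ?_⟩
    have e : max (α+β) β = α+β := by omega
    rw [e]; ring

/-- The Apéry description is contained in the semigroup (explicit representations). -/
lemma ars_sub (h : ℕ) {x : ℕ} (hx : x ∈ arsSet h) :
    ∃ z1 z2 z3 z4 : ℕ, x = z1 * (h * (h + 1)) + z2 * (h * (h + 1) + 1) +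
      z3 * (h + 1) ^ 2 + z4 * ((h + 1) ^ 2 + 1) := by
  rcases hx with (((⟨i, _, rfl⟩ | ⟨j, _, _, rfl⟩) | ⟨l, _, _, rfl⟩) |
      ⟨γ, ν, _, _, _, _, rfl⟩) | ⟨α, β, _, _, _, _, rfl⟩
  · exact ⟨0, i, 0, 0, by ring⟩
  · exact ⟨0, 0, j, 0, by ring⟩
  · exact ⟨0, 0, 0, l, by ring⟩
  · exact ⟨0, γ, 0, ν, by ring⟩
  · exact ⟨0, 0, α, β, by ring⟩

/-- Uniqueness of division with remainder. -/
lemma ars_unique (A a b c d : ℕ) (hb : b < A) (hd : d < A) (he : a*A + b = c*A + d) :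
    a = c ∧ b = d := by
  rcases lt_trichotomy a c with hlt | heq | hgt
  · nlinarith [Nat.mul_le_mul_right A (show a+1 ≤ c from hlt)]
  · subst heq; omega
  · nlinarith [Nat.mul_le_mul_right A (show c+1 ≤ a from hgt)]

/-- Decomposition with remainder. -/
lemma ars_decomp (E A : ℕ) (hA : 0 < A) : ∃ k ρ, ρ < A ∧ E = k*A + ρ :=
  ⟨E/A, E%A, Nat.mod_lt _ hA, by rw [Nat.mul_comm]; exact (Nat.div_add_mod _ _).symm⟩

/-- For every integer `h ≥ 2`, the Apéry set of the Arslan semigroup `Γ_{A_h}` with respect to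
`a₁ = h(h+1)` is given by the explicit description. -/
theorem arslan_apery (h : ℕ) (hh : 2 ≤ h)
    (a1 a2 a3 a4 : ℕ)
    (ha1 : a1 = h * (h + 1)) (ha2 : a2 = h * (h + 1) + 1)
    (ha3 : a3 = (h + 1) ^ 2) (ha4 : a4 = (h + 1) ^ 2 + 1)
    (Γ : Set ℕ)
    (hΓ : Γ = {x | ∃ z1 z2 z3 z4 : ℕ, x = z1 * a1 + z2 * a2 + z3 * a3 + z4 * a4}) :
    {x ∈ Γ | ¬ ∃ y ∈ Γ, (x : ℤ) - (a1 : ℤ) = (y : ℤ)} =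
      {x | ∃ i, i ≤ h ∧ x = i * a2} ∪
      {x | ∃ j, 1 ≤ j ∧ j ≤ h - 1 ∧ x = j * a3} ∪
      {x | ∃ l, 1 ≤ l ∧ l ≤ h - 1 ∧ x = l * a4} ∪
      {x | ∃ γ ν, 1 ≤ γ ∧ 1 ≤ ν ∧ 2 ≤ γ + ν ∧ γ + ν ≤ h ∧ x = γ * a2 + ν * a4} ∪
      {x | ∃ α β, 1 ≤ α ∧ 1 ≤ β ∧ 2 ≤ α + β ∧ α + β ≤ h - 1 ∧ x = α * a3 + β * a4} := by
  subst ha1 ha2 ha3 ha4 hΓ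
  have hA : 0 < h * (h + 1) := by positivity
  have hSet : ({x | ∃ i, i ≤ h ∧ x = i * (h * (h + 1) + 1)} ∪
      {x | ∃ j, 1 ≤ j ∧ j ≤ h - 1 ∧ x = j * (h + 1) ^ 2} ∪
      {x | ∃ l, 1 ≤ l ∧ l ≤ h - 1 ∧ x = l * ((h + 1) ^ 2 + 1)} ∪
      {x | ∃ γ ν, 1 ≤ γ ∧ 1 ≤ ν ∧ 2 ≤ γ + ν ∧ γ + ν ≤ h ∧
          x = γ * (h * (h + 1) + 1) + ν * ((h + 1) ^ 2 + 1)} ∪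
      {x | ∃ α β, 1 ≤ α ∧ 1 ≤ β ∧ 2 ≤ α + β ∧ α + β ≤ h - 1 ∧
          x = α * (h + 1) ^ 2 + β * ((h + 1) ^ 2 + 1)}) = arsSet h := rfl
  rw [hSet]
  ext x
  simp only [Set.mem_setOf_eq, Set.sep_setOf]
  constructor
  · rintro ⟨⟨z1, z2, z3, z4, hx⟩, hnot⟩
    obtain ⟨k, ρ, hρA, hrk⟩ := ars_decomp (z2 + z3*(h+1) + z4*(h+2)) (h*(h+1)) hA
    obtain ⟨q, r0, hr0lt, hρqr⟩ := ars_decomp ρ (h+1) (by omega)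
    obtain ⟨hqb, hr0b⟩ := ars_key h z2 z3 z4 k ρ q r0 hh hrk hρA hρqr hr0lt
    have hq : q < h := by
      by_contra hcon
      push_neg at hcon
      have : h*(h+1) ≤ q*(h+1) := Nat.mul_le_mul_right _ hcon
      omega
    have hr0 : r0 ≤ h := by omega
    have hmem := ars_mem h q r0 hh hq hr0
    have hxval : x = (z1+z2+z3+z4+k)*(h*(h+1)) + (q*(h+1)+r0) := by
      have e : z1 * (h*(h+1)) + z2*(h*(h+1)+1) + z3*(h+1)^2 + z4*((h+1)^2+1)
          = (z1+z2+z3+z4)*(h*(h+1)) + (z2 + z3*(h+1) + z4*(h+2)) := by ring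
      rw [hx, e, hrk, hρqr]; ring
    rcases Nat.lt_or_ge (max q r0) (z1+z2+z3+z4+k) with hlt | hge
    · exfalso
      obtain ⟨d, hd⟩ : ∃ d, z1+z2+z3+z4+k = max q r0 + d + 1 :=
        ⟨z1+z2+z3+z4+k - max q r0 - 1, by omega⟩
      obtain ⟨e1, e2, e3, e4, he⟩ := ars_sub h hmem
      refine hnot ⟨max q r0 * (h*(h+1)) + (q*(h+1)+r0) + d*(h*(h+1)),
        ⟨e1+d, e2, e3, e4, by rw [he]; ring⟩, ?_⟩
      have hx2 : x = h*(h+1) + (max q r0 * (h*(h+1)) + (q*(h+1)+r0) + d*(h*(h+1))) := by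
        rw [hxval, hd]; ring
      rw [hx2]; push_cast; ring
    · have hteq : max q r0 = z1+z2+z3+z4+k := by omega
      have hxm : x = max q r0 * (h*(h+1)) + (q*(h+1)+r0) := by rw [hxval, ← hteq]
      rw [hxm]; exact hmem
  · intro hx
    obtain ⟨q, r0, hq, hr0, hxm⟩ := ars_form h hh hx
    obtain ⟨e1, e2, e3, e4, he⟩ := ars_sub h hx
    refine ⟨⟨e1, e2, e3, e4, he⟩, ?_⟩
    rintro ⟨y, ⟨z1, z2, z3, z4, hy⟩, hIZ⟩
    have hxy : x = h*(h+1) + y := by omega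
    obtain ⟨k, ρ, hρA, hrk⟩ := ars_decomp (z2 + z3*(h+1) + z4*(h+2)) (h*(h+1)) hA
    have hxval : x = (1+z1+z2+z3+z4+k)*(h*(h+1)) + ρ := by
      have e : h*(h+1) + (z1 * (h*(h+1)) + z2*(h*(h+1)+1) + z3*(h+1)^2 + z4*((h+1)^2+1))
          = (1+z1+z2+z3+z4)*(h*(h+1)) + (z2 + z3*(h+1) + z4*(h+2)) := by ring
      rw [hxy, hy, e, hrk]; ring
    have hρlt2 : q*(h+1) + r0 < h*(h+1) := by
      have h1 : q+1 ≤ h := hq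
      nlinarith [Nat.mul_le_mul_right (h+1) h1]
    obtain ⟨hteq, hρeq⟩ := ars_unique (h*(h+1)) (max q r0) (q*(h+1)+r0)
      (1+z1+z2+z3+z4+k) ρ hρlt2 hρA (by rw [← hxm, hxval])
    obtain ⟨hqb, hr0b⟩ := ars_key h z2 z3 z4 k ρ q r0 hh hrk hρA hρeq.symm (by omega)
    omega
end

section
/- For every integer h ≥ 2, the set of pseudo-Frobenius numbers PF(Γ_{A_h}) of the Arslan semigroup Γ_{A_h} has exactly 2h−1 elements (i.e., the type of Γ_{A_h} is 2h−1). -/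
/-!
Write `n = h(h+1)`. The generators are `n + (h+1)ε + δ` with `ε, δ ∈ {0, 1}`, so `Γ_{A_h}` consists
of the numbers `k n + t (h+1) + c` with `t, c ≤ k`. Every natural number has mixed-radix
coordinates `x = k n + q (h+1) + s` with `q < h`, `s ≤ h`, and then `x ∈ Γ` iff `q ≤ k` and `s ≤ k`.
A gap `x` is pseudo-Frobenius as soon as `x` plus each generator lies in `Γ`, and chasing the
coordinates of `x + a₁, x + a₂, x + a₃` leaves exactly the coordinates `(h-2, h-1, s)` with
`s ≤ h-2` and `(h-1, q, h)` with `q ≤ h-1`: `(h - 1) + h` numbers. Negative pseudo-Frobenius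
numbers are excluded because `Γ` has no two consecutive elements below `n`.
-/

open Finset

def pseudoFrobenius (Γ : Set ℕ) : Set ℤ :=
  {x | (¬ ∃ y ∈ Γ, x = (y : ℤ)) ∧ ∀ s ∈ Γ, 0 < s → ∃ y ∈ Γ, x + (s : ℤ) = (y : ℤ)}

def natPseudoFrobenius (Γ : Set ℕ) : Set ℕ :=
  {x | x ∉ Γ ∧ ∀ s ∈ Γ, 0 < s → x + s ∈ Γ}

theorem pseudoFrobenius_eq_image_natPseudoFrobenius {Γ : Set ℕ} {m : ℕ} (hm0 : 0 < m)
    (hm : m ∈ Γ) (hm1 : m + 1 ∈ Γ) (hconsecutive : ∀ y ∈ Γ, y + 1 ∈ Γ → m ≤ y) :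
    pseudoFrobenius Γ = Nat.cast '' natPseudoFrobenius Γ := by
  ext x
  constructor
  · rintro ⟨hx, hadd⟩
    obtain ⟨y, hy, hxy⟩ := hadd m hm hm0
    obtain ⟨y', hy', hxy'⟩ := hadd (m + 1) hm1 (by omega)
    obtain rfl : y' = y + 1 := by omega
    have := hconsecutive y hy hy'
    lift x to ℕ using by omega
    refine ⟨x, ⟨fun hxΓ => hx ⟨x, hxΓ, rfl⟩, fun s hs hs0 => ?_⟩, rfl⟩
    obtain ⟨z, hz, hxz⟩ := hadd s hs hs0
    exact (show x + s = z by omega) ▸ hz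
  · rintro ⟨x, ⟨hx, hadd⟩, rfl⟩
    refine ⟨fun ⟨y, hy, hxy⟩ => hx ((by omega : x = y) ▸ hy), fun s hs hs0 => ?_⟩
    exact ⟨x + s, hadd s hs hs0, by push_cast; rfl⟩

theorem AddSubmonoid.add_mem_closure_of_forall_add_mem {M : Type*} [AddMonoid M] {G : Set M}
    {x s : M} (hG : ∀ g ∈ G, x + g ∈ AddSubmonoid.closure G) (hs : s ∈ AddSubmonoid.closure G)
    (hs0 : s ≠ 0) :
    x + s ∈ AddSubmonoid.closure G := by
  induction hs using AddSubmonoid.closure_induction with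
  | mem g hg => exact hG g hg
  | zero => exact absurd rfl hs0
  | add s t _ ht ihs iht =>
    by_cases h : s = 0
    · subst h
      rw [zero_add] at hs0 ⊢
      exact iht hs0
    · rw [← add_assoc]
      exact add_mem (ihs h) ht

theorem mem_natPseudoFrobenius_closure_iff {G : Set ℕ} (hG : 0 ∉ G) {x : ℕ} :
    x ∈ natPseudoFrobenius (AddSubmonoid.closure G) ↔
      x ∉ AddSubmonoid.closure G ∧ ∀ g ∈ G, x + g ∈ AddSubmonoid.closure G := by
  refine and_congr_right fun _ => ⟨fun hadd g hg => ?_, fun hgen s hs hs0 => ?_⟩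
  · exact hadd g (AddSubmonoid.subset_closure hg) (Nat.pos_of_ne_zero fun h => hG (h ▸ hg))
  · exact AddSubmonoid.add_mem_closure_of_forall_add_mem hgen hs hs0.ne'

theorem AddSubmonoid.coe_closure_four (a b c d : ℕ) :
    (AddSubmonoid.closure {a, b, c, d} : Set ℕ) =
      {x | ∃ z₁ z₂ z₃ z₄ : ℕ, x = z₁ * a + z₂ * b + z₃ * c + z₄ * d} := by
  ext x
  simp only [Set.insert_eq, AddSubmonoid.closure_union, SetLike.mem_coe, AddSubmonoid.mem_sup,
    AddSubmonoid.mem_closure_singleton, smul_eq_mul, Set.mem_ofPred_eq]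
  constructor
  · rintro ⟨_, ⟨z₁, rfl⟩, _, ⟨_, ⟨z₂, rfl⟩, _, ⟨_, ⟨z₃, rfl⟩, _, ⟨z₄, rfl⟩, rfl⟩, rfl⟩, rfl⟩
    exact ⟨z₁, z₂, z₃, z₄, by ring⟩
  · rintro ⟨z₁, z₂, z₃, z₄, rfl⟩
    exact ⟨_, ⟨z₁, rfl⟩, _, ⟨_, ⟨z₂, rfl⟩, _, ⟨_, ⟨z₃, rfl⟩, _, ⟨z₄, rfl⟩, rfl⟩, rfl⟩, by ring⟩

theorem mem_closure_corners_iff {n d x : ℕ} :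
    x ∈ AddSubmonoid.closure {n, n + 1, n + d, n + d + 1} ↔
      ∃ k t c, t ≤ k ∧ c ≤ k ∧ x = k * n + t * d + c := by
  constructor
  · intro hx
    induction hx using AddSubmonoid.closure_induction with
    | mem g hg =>
      rcases hg with rfl | rfl | rfl | rfl
      exacts [⟨1, 0, 0, by simp⟩, ⟨1, 0, 1, by simp⟩, ⟨1, 1, 0, by simp⟩, ⟨1, 1, 1, by simp⟩]
    | zero => exact ⟨0, 0, 0, by simp⟩
    | add _ _ _ _ ih ih' =>
      obtain ⟨k, t, c, ht, hc, rfl⟩ := ih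
      obtain ⟨k', t', c', ht', hc', rfl⟩ := ih'
      exact ⟨k + k', t + t', c + c', by omega, by omega, by ring⟩
  · rintro ⟨k, t, c, ht, hc, rfl⟩
    have hmul : ∀ g ∈ ({n, n + 1, n + d, n + d + 1} : Set ℕ), ∀ j : ℕ,
        j * g ∈ AddSubmonoid.closure {n, n + 1, n + d, n + d + 1} := fun g hg j => by
      simpa using nsmul_mem (AddSubmonoid.subset_closure hg) j
    rcases le_total c t with hct | htc
    · obtain ⟨a, rfl⟩ := Nat.exists_eq_add_of_le hct
      obtain ⟨b, rfl⟩ := Nat.exists_eq_add_of_le ht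
      convert add_mem (add_mem (hmul n (by simp) b) (hmul (n + d) (by simp) a))
        (hmul (n + d + 1) (by simp) c) using 1
      ring
    · obtain ⟨a, rfl⟩ := Nat.exists_eq_add_of_le htc
      obtain ⟨b, rfl⟩ := Nat.exists_eq_add_of_le hc
      convert add_mem (add_mem (hmul n (by simp) b) (hmul (n + 1) (by simp) a))
        (hmul (n + d + 1) (by simp) t) using 1
      ring

theorem Nat.mul_add_eq_mul_add_iff {b k r k' r' : ℕ} (hr : r < b) (hr' : r' < b) :
    k * b + r = k' * b + r' ↔ k = k' ∧ r = r' := by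
  refine ⟨fun e => ?_, fun ⟨hk, hr⟩ => hk ▸ hr ▸ rfl⟩
  have hb : 0 < b := by omega
  obtain ⟨hdiv, hmod⟩ := (Nat.div_mod_unique hb).2 ⟨(by ring : r + b * k = k * b + r), hr⟩
  obtain ⟨hdiv', hmod'⟩ := (Nat.div_mod_unique hb).2 ⟨(by ring : r' + b * k' = k' * b + r'), hr'⟩
  rw [e] at hdiv hmod
  exact ⟨hdiv ▸ hdiv', hmod ▸ hmod'⟩

def arslan (h : ℕ) : AddSubmonoid ℕ :=
  AddSubmonoid.closure {h * (h + 1), h * (h + 1) + 1, (h + 1) ^ 2, (h + 1) ^ 2 + 1}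

section Arslan

variable {h : ℕ}

theorem coe_arslan (h : ℕ) : (arslan h : Set ℕ) = {x | ∃ z₁ z₂ z₃ z₄ : ℕ,
    x = z₁ * (h * (h + 1)) + z₂ * (h * (h + 1) + 1) + z₃ * (h + 1) ^ 2 + z₄ * ((h + 1) ^ 2 + 1)} :=
  AddSubmonoid.coe_closure_four _ _ _ _

theorem mem_arslan_iff {x : ℕ} :
    x ∈ arslan h ↔ ∃ k t c, t ≤ k ∧ c ≤ k ∧ x = k * (h * (h + 1)) + t * (h + 1) + c := by
  rw [arslan, show (h + 1) ^ 2 = h * (h + 1) + (h + 1) by ring, mem_closure_corners_iff]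

theorem le_of_mem_arslan {y : ℕ} (hy : y ∈ arslan h) (hy0 : 0 < y) : h * (h + 1) ≤ y := by
  obtain ⟨k, t, c, ht, hc, rfl⟩ := mem_arslan_iff.1 hy
  rcases Nat.eq_zero_or_pos k with rfl | hk
  · obtain rfl : t = 0 := by omega
    obtain rfl : c = 0 := by omega
    simp at hy0
  · nlinarith

theorem le_of_mem_arslan_of_add_one_mem {y : ℕ} (hy : y ∈ arslan h) (hy1 : y + 1 ∈ arslan h) :
    h * (h + 1) ≤ y := by
  rcases Nat.eq_zero_or_pos y with rfl | hy0
  · have := le_of_mem_arslan hy1 one_pos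
    rcases Nat.eq_zero_or_pos h with rfl | hh
    · rfl
    · nlinarith
  · exact le_of_mem_arslan hy hy0

theorem arslan_digits_lt {q s : ℕ} (hq : q < h) (hs : s ≤ h) :
    q * (h + 1) + s < h * (h + 1) := by
  nlinarith

theorem arslan_coords_lt {k q s : ℕ} (hq : q < h) (hs : s ≤ h) :
    k * (h * (h + 1)) + q * (h + 1) + s < (k + 1) * (h * (h + 1)) := by
  linarith [arslan_digits_lt hq hs]

theorem exists_arslan_coords (hh : 0 < h) (x : ℕ) :
    ∃ k q s, q < h ∧ s ≤ h ∧ x = k * (h * (h + 1)) + q * (h + 1) + s := by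
  refine ⟨x / (h * (h + 1)), x % (h * (h + 1)) / (h + 1), x % (h * (h + 1)) % (h + 1), ?_,
    Nat.lt_succ_iff.1 (Nat.mod_lt _ h.succ_pos), ?_⟩
  · exact (Nat.div_lt_iff_lt_mul h.succ_pos).2 (Nat.mod_lt _ (by positivity))
  · have := Nat.div_add_mod x (h * (h + 1))
    have := Nat.div_add_mod (x % (h * (h + 1))) (h + 1)
    linarith

theorem coords_mem_arslan_iff {k q s : ℕ} (hq : q < h) (hs : s ≤ h) :
    k * (h * (h + 1)) + q * (h + 1) + s ∈ arslan h ↔ q ≤ k ∧ s ≤ k := by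
  refine ⟨fun hx => ?_, fun ⟨hqk, hsk⟩ => mem_arslan_iff.2 ⟨k, q, s, hqk, hsk, rfl⟩⟩
  obtain ⟨K, t, c, htK, hcK, hx⟩ := mem_arslan_iff.1 hx
  rcases lt_or_ge K h with hK | hK
  · -- both sides are mixed-radix expansions with digits in range
    rw [add_assoc, add_assoc, Nat.mul_add_eq_mul_add_iff (arslan_digits_lt hq hs)
      (arslan_digits_lt (by omega) (by omega)), Nat.mul_add_eq_mul_add_iff (by omega) (by omega)]
      at hx
    omega
  · have hKk : K * (h * (h + 1)) < (k + 1) * (h * (h + 1)) :=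
      calc K * (h * (h + 1)) ≤ K * (h * (h + 1)) + t * (h + 1) + c := by omega
        _ = k * (h * (h + 1)) + q * (h + 1) + s := hx.symm
        _ < (k + 1) * (h * (h + 1)) := arslan_coords_lt hq hs
    have := Nat.lt_of_mul_lt_mul_right hKk
    omega

theorem mem_arslan_of_le (hh : 0 < h) {x : ℕ} (hx : h * (h * (h + 1)) ≤ x) : x ∈ arslan h := by
  obtain ⟨k, q, s, hq, hs, rfl⟩ := exists_arslan_coords hh x
  have := Nat.lt_of_mul_lt_mul_right (hx.trans_lt (arslan_coords_lt (k := k) hq hs))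
  exact (coords_mem_arslan_iff hq hs).2 ⟨by omega, by omega⟩

theorem mem_natPseudoFrobenius_arslan_iff (hh : 0 < h) {x : ℕ} :
    x ∈ natPseudoFrobenius (arslan h) ↔ x ∉ arslan h ∧ x + h * (h + 1) ∈ arslan h ∧
      x + (h * (h + 1) + 1) ∈ arslan h ∧ x + (h + 1) ^ 2 ∈ arslan h ∧
      x + ((h + 1) ^ 2 + 1) ∈ arslan h := by
  rw [arslan, mem_natPseudoFrobenius_closure_iff (by simp [hh.ne', (pow_pos h.succ_pos 2).ne])]
  simp only [Set.forall_mem_insert, Set.mem_singleton_iff, forall_eq]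

theorem arslan_gap_cases (hh : 0 < h) {x : ℕ} (hx : x ∉ arslan h)
    (h₁ : x + h * (h + 1) ∈ arslan h) (h₂ : x + (h * (h + 1) + 1) ∈ arslan h)
    (h₃ : x + (h + 1) ^ 2 ∈ arslan h) :
    (∃ k s, k + 2 = h ∧ s ≤ k ∧ x = k * (h * (h + 1)) + (k + 1) * (h + 1) + s) ∨
      (∃ k q, k + 1 = h ∧ q < h ∧ x = k * (h * (h + 1)) + q * (h + 1) + h) := by
  obtain ⟨k, q, s, hq, hs, rfl⟩ := exists_arslan_coords hh x
  rw [coords_mem_arslan_iff hq hs] at hx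
  rw [show k * (h * (h + 1)) + q * (h + 1) + s + h * (h + 1) =
    (k + 1) * (h * (h + 1)) + q * (h + 1) + s by ring, coords_mem_arslan_iff hq hs] at h₁
  rcases hs.lt_or_eq with hs | rfl
  · rw [show k * (h * (h + 1)) + q * (h + 1) + s + (h * (h + 1) + 1) =
      (k + 1) * (h * (h + 1)) + q * (h + 1) + (s + 1) by ring, coords_mem_arslan_iff hq hs] at h₂
    rw [show k * (h * (h + 1)) + q * (h + 1) + s + (h + 1) ^ 2 =
      (k + 1) * (h * (h + 1)) + (q + 1) * (h + 1) + s by ring] at h₃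
    obtain rfl : q = k + 1 := by omega
    by_cases hq' : k + 2 < h
    · rw [coords_mem_arslan_iff hq' hs.le] at h₃
      omega
    · exact .inl ⟨k, s, by omega, by omega, rfl⟩
  · exact .inr ⟨k, q, by omega, hq, rfl⟩

theorem mem_natPseudoFrobenius_arslan_iff_coords (hh : 0 < h) {x : ℕ} :
    x ∈ natPseudoFrobenius (arslan h) ↔
      (∃ k s, k + 2 = h ∧ s ≤ k ∧ x = k * (h * (h + 1)) + (k + 1) * (h + 1) + s) ∨
        (∃ k q, k + 1 = h ∧ q < h ∧ x = k * (h * (h + 1)) + q * (h + 1) + h) := by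
  rw [mem_natPseudoFrobenius_arslan_iff hh]
  refine ⟨fun ⟨hx, h₁, h₂, h₃, _⟩ => arslan_gap_cases hh hx h₁ h₂ h₃, ?_⟩
  rintro (⟨k, s, rfl, hs, rfl⟩ | ⟨k, q, rfl, hq, rfl⟩)
  · refine ⟨by rw [coords_mem_arslan_iff (by omega) (by omega)]; omega, ?_, ?_, ?_, ?_⟩
    · exact mem_arslan_iff.2 ⟨k + 1, k + 1, s, le_rfl, by omega, by ring⟩
    · exact mem_arslan_iff.2 ⟨k + 1, k + 1, s + 1, le_rfl, by omega, by ring⟩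
    · exact mem_arslan_iff.2 ⟨k + 2, 0, s, by omega, by omega, by ring⟩
    · exact mem_arslan_iff.2 ⟨k + 2, 0, s + 1, by omega, by omega, by ring⟩
  · -- adding any generator passes `h * n`, beyond which everything lies in the semigroup
    have hbig : ∀ g, (k + 1) * (k + 1 + 1) ≤ g →
        k * ((k + 1) * (k + 1 + 1)) + q * (k + 1 + 1) + (k + 1) + g ∈ arslan (k + 1) :=
      fun g hg => mem_arslan_of_le hh (by nlinarith)
    refine ⟨by rw [coords_mem_arslan_iff hq le_rfl]; omega, hbig _ le_rfl, hbig _ (by omega),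
      hbig _ (by nlinarith), hbig _ (by nlinarith)⟩

theorem ncard_natPseudoFrobenius_arslan (hh : 2 ≤ h) :
    (natPseudoFrobenius (arslan h)).ncard = 2 * h - 1 := by
  obtain ⟨m, rfl⟩ : ∃ m, h = m + 2 := ⟨h - 2, by omega⟩
  set n := (m + 2) * (m + 2 + 1)
  have hpf : natPseudoFrobenius (arslan (m + 2)) =
      ↑((range (m + 1)).image (fun s => m * n + (m + 1) * (m + 2 + 1) + s) ∪
        (range (m + 2)).image (fun q => (m + 1) * n + q * (m + 2 + 1) + (m + 2))) := by
    ext x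
    simp only [mem_natPseudoFrobenius_arslan_iff_coords (by omega : 0 < m + 2), coe_union,
      coe_image, coe_range, Set.mem_union, Set.mem_image, Set.mem_Iio]
    constructor
    · rintro (⟨k, s, hk, hs, rfl⟩ | ⟨k, q, hk, hq, rfl⟩)
      · obtain rfl : k = m := by omega
        exact .inl ⟨s, by omega, rfl⟩
      · obtain rfl : k = m + 1 := by omega
        exact .inr ⟨q, hq, rfl⟩
    · rintro (⟨s, hs, rfl⟩ | ⟨q, hq, rfl⟩)
      · exact .inl ⟨m, s, rfl, by omega, rfl⟩
      · exact .inr ⟨m + 1, q, rfl, hq, rfl⟩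
  rw [hpf, Set.ncard_coe_finset, card_union_of_disjoint,
    card_image_of_injective _ (add_right_injective _), card_image_of_injective, card_range,
    card_range]
  · omega
  · intro q q' e
    simpa using e
  · -- the first family lies below `(m + 1) * n`, the second above it
    simp only [disjoint_left, mem_image, mem_range]
    rintro _ ⟨s, hs, rfl⟩ ⟨q, -, e⟩
    have : m * n + (m + 1) * (m + 2 + 1) + s < (m + 1) * n :=
      arslan_coords_lt (by omega) (by omega)
    omega

end Arslan

/-- For every integer `h ≥ 2`, the set of pseudo-Frobenius numbers of the Arslan semigroup
`Γ_{A_h}` has exactly `2h − 1` elements, i.e. the type of `Γ_{A_h}` is `2h − 1`. -/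
theorem arslan_type (h : ℕ) (hh : 2 ≤ h)
    (a1 a2 a3 a4 : ℕ)
    (ha1 : a1 = h * (h + 1)) (ha2 : a2 = h * (h + 1) + 1)
    (ha3 : a3 = (h + 1) ^ 2) (ha4 : a4 = (h + 1) ^ 2 + 1)
    (Γ : Set ℕ)
    (hΓ : Γ = {x | ∃ z1 z2 z3 z4 : ℕ, x = z1 * a1 + z2 * a2 + z3 * a3 + z4 * a4}) :
    {x : ℤ | (¬ ∃ y ∈ Γ, x = (y : ℤ)) ∧
        ∀ s ∈ Γ, 0 < s → ∃ y ∈ Γ, x + (s : ℤ) = (y : ℤ)}.ncard = 2 * h - 1 := by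
  subst ha1 ha2 ha3 ha4 hΓ
  rw [← coe_arslan]
  change (pseudoFrobenius (arslan h)).ncard = _
  rw [pseudoFrobenius_eq_image_natPseudoFrobenius (Γ := arslan h) (by positivity)
      (mem_arslan_iff.2 ⟨1, 0, 0, by simp⟩) (mem_arslan_iff.2 ⟨1, 0, 1, by simp⟩)
      fun _ => le_of_mem_arslan_of_add_one_mem,
    Set.ncard_image_of_injective _ Nat.cast_injective, ncard_natPseudoFrobenius_arslan hh]
end

section
/- For every integer h ≥ 2, the number h is the least natural number c such that 1 + c·a₄ ∈ Γ_{A_h}; that is, 1 + h·((h+1)²+1) ∈ Γ_{A_h}, while 1 + c·((h+1)²+1) ∉ Γ_{A_h} for every natural number c < h. -/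
/-- For every integer `h ≥ 2`, the number `h` is the least natural number `c` such that
`1 + c·a₄ ∈ Γ_{A_h}`. -/
theorem arslan_least (h : ℕ) (hh : 2 ≤ h)
    (a1 a2 a3 a4 : ℕ)
    (ha1 : a1 = h * (h + 1)) (ha2 : a2 = h * (h + 1) + 1)
    (ha3 : a3 = (h + 1) ^ 2) (ha4 : a4 = (h + 1) ^ 2 + 1)
    (Γ : Set ℕ)
    (hΓ : Γ = {x | ∃ z1 z2 z3 z4 : ℕ, x = z1 * a1 + z2 * a2 + z3 * a3 + z4 * a4}) :
    1 + h * a4 ∈ Γ ∧ ∀ c : ℕ, c < h → 1 + c * a4 ∉ Γ := by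
  subst ha1 ha2 ha3 ha4 hΓ
  constructor
  · exact ⟨0, h + 1, 0, 0, by ring⟩
  · rintro c hc ⟨z1, z2, z3, z4, heq⟩
    have H : (1 : ℤ) + c + c * (h + 1) ^ 2 =
        (h + 1) * (z1 * h + z2 * h + z3 * (h + 1) + z4 * (h + 1)) + (z2 + z4) := by
      have := congrArg (Nat.cast : ℕ → ℤ) heq
      push_cast at this
      linear_combination this
    have hdvd : ((h : ℤ) + 1) ∣ ((z2 : ℤ) + z4 - (1 + c)) :=
      ⟨(c : ℤ) * (h + 1) - (z1 * h + z2 * h + z3 * (h + 1) + z4 * (h + 1)), by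
        linear_combination -H⟩
    obtain ⟨k, hk⟩ := hdvd
    have hc' : (c : ℤ) < h := by exact_mod_cast hc
    have hh' : (2 : ℤ) ≤ h := by exact_mod_cast hh
    have hz2 : (0 : ℤ) ≤ z2 := Int.ofNat_nonneg z2
    have hz4 : (0 : ℤ) ≤ z4 := Int.ofNat_nonneg z4
    have hz1 : (0 : ℤ) ≤ z1 := Int.ofNat_nonneg z1
    have hz3 : (0 : ℤ) ≤ z3 := Int.ofNat_nonneg z3
    have hcn : (0 : ℤ) ≤ c := Int.ofNat_nonneg c
    have hk0 : 0 ≤ k := by nlinarith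
    -- from H and hk: c*(h+1) = S + k where S = z1*h + z2*h + z3*(h+1) + z4*(h+1)
    have key : (c : ℤ) * (h + 1) = z1 * h + z2 * h + z3 * (h + 1) + z4 * (h + 1) + k := by
      have h1 : (0 : ℤ) < h + 1 := by linarith
      have := H
      have : ((h : ℤ) + 1) * (c * (h + 1)) =
          ((h : ℤ) + 1) * (z1 * h + z2 * h + z3 * (h + 1) + z4 * (h + 1) + k) := by
        linear_combination H + hk
      exact mul_left_cancel₀ (by linarith : ((h : ℤ) + 1) ≠ 0) this
    nlinarith [mul_nonneg hk0 (by linarith : (0:ℤ) ≤ (h:ℤ)), mul_nonneg hz1 (by linarith : (0:ℤ) ≤ (h:ℤ)), mul_nonneg hz3 (by linarith : (0:ℤ) ≤ (h:ℤ)+1)]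
end

section
/- For all integers n ≥ 2 and r ≥ 3n+2, the Backelin numerical semigroup Γ_{B_{nr}} is homogeneous; that is, for every nonzero element x of the Apéry set Ap(Γ_{B_{nr}}, m₁), any two representations x = z₁m₁ + z₂m₂ + z₃m₃ + z₄m₄ = w₁m₁ + w₂m₂ + w₃m₃ + w₄m₄ with z₁,…,z₄, w₁,…,w₄ ∈ ℕ satisfy z₁+z₂+z₃+z₄ = w₁+w₂+w₃+w₄. -/
lemma rep_exists (n d : ℕ) (hd : 3*n+1 ≤ d) :
    ∃ A B C, d = 3*A + (3*n+1)*B + (3*n+2)*C := by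
  have h3 : d % 3 = 0 ∨ d % 3 = 1 ∨ d % 3 = 2 := by omega
  rcases h3 with h | h | h
  · exact ⟨d/3, 0, 0, by omega⟩
  · refine ⟨(d - (3*n+1))/3, 1, 0, ?_⟩
    have : (3*n+1) % 3 = 1 := by omega
    omega
  · refine ⟨(d - (3*n+2))/3, 0, 1, ?_⟩
    have : (3*n+2) % 3 = 2 := by omega
    omega

lemma rep_bound (n : ℕ) (hn1 : 1 ≤ n) : ∀ d, (∃ A B C, d = 3*A + (3*n+1)*B + (3*n+2)*C) →
    ∀ K, d ≤ K*(3*n+2) →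
    ∃ a b c, d = 3*a + (3*n+1)*b + (3*n+2)*c ∧ a + b + c ≤ K + (3*n+2) := by
  intro d
  induction d using Nat.strong_induction_on with
  | _ d IH =>
    intro hrep K hK
    by_cases hsmall : d < 2*(3*n+2)
    · obtain ⟨A, B, C, hABC⟩ := hrep
      refine ⟨A, B, C, hABC, ?_⟩
      have h1 : 3*B ≤ (3*n+1)*B := mul_le_mul_left (by omega : (3:ℕ) ≤ 3*n+1) B
      have h2 : 3*C ≤ (3*n+2)*C := mul_le_mul_left (by omega : (3:ℕ) ≤ 3*n+2) C
      omega
    · push_neg at hsmall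
      have hK1 : 1 ≤ K := by
        rcases Nat.eq_zero_or_pos K with h | h
        · subst h; simp at hK; omega
        · exact h
      obtain ⟨K', rfl⟩ : ∃ K', K = K' + 1 := ⟨K - 1, by omega⟩
      have hK' : d - (3*n+2) ≤ K'*(3*n+2) := by
        have : (K'+1)*(3*n+2) = K'*(3*n+2) + (3*n+2) := by ring
        omega
      have hrep' : ∃ A B C, d - (3*n+2) = 3*A + (3*n+1)*B + (3*n+2)*C :=
        rep_exists n _ (by omega)
      obtain ⟨a, b, c, hval, hsum⟩ := IH (d - (3*n+2)) (by omega) hrep' K' hK'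
      refine ⟨a, b, c+1, ?_, by omega⟩
      have : (3*n+2)*(c+1) = (3*n+2)*c + (3*n+2) := by ring
      omega

lemma key_lemma (n r s : ℕ) (hn : 2 ≤ n) (hr : 3*n+2 ≤ r) (hs : s = r*(3*n+2)+3)
    (z2 z3 z4 w2 w3 w4 : ℕ)
    (heq : (z2+z3+z4)*s + (3*z2+(3*n+1)*z3+(3*n+2)*z4)
         = (w2+w3+w4)*s + (3*w2+(3*n+1)*w3+(3*n+2)*w4))
    (hlt : w2+w3+w4 < z2+z3+z4) :
    ∃ a1 a2 a3 a4 : ℕ,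
      (w2+w3+w4)*s + (3*w2+(3*n+1)*w3+(3*n+2)*w4)
        = s + (a1*s + a2*(s+3) + a3*(s+3*n+1) + a4*(s+3*n+2)) := by
  set L := z2+z3+z4 with hL
  set M := w2+w3+w4 with hM
  set a := 3*z2+(3*n+1)*z3+(3*n+2)*z4 with ha
  set b := 3*w2+(3*n+1)*w3+(3*n+2)*w4 with hb
  -- b = (L - M)*s + a
  have hLM : L = M + (L - M) := by omega
  have hsplit : (M + (L-M))*s = M*s + (L-M)*s := by ring
  have hba : b = (L-M)*s + a := by
    have h := heq
    rw [hLM, hsplit] at h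
    omega
  have hone : 1*s ≤ (L-M)*s := mul_le_mul_left (by omega : 1 ≤ L - M) s
  have hsb : s ≤ b := by omega
  -- b ≤ (3n+2)*M
  have h2 : 3*w2 ≤ (3*n+2)*w2 := mul_le_mul_left (by omega : (3:ℕ) ≤ 3*n+2) w2
  have h3 : (3*n+1)*w3 ≤ (3*n+2)*w3 := mul_le_mul_left (by omega : 3*n+1 ≤ 3*n+2) w3
  have hMsplit : (3*n+2)*M = (3*n+2)*w2 + (3*n+2)*w3 + (3*n+2)*w4 := by
    rw [hM]; ring
  have hbM : b ≤ (3*n+2)*M := by omega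
  -- M ≥ r + 1
  have hMr : r + 1 ≤ M := by
    by_contra hcon
    push_neg at hcon
    have : (3*n+2)*M ≤ (3*n+2)*r := mul_le_mul_right (by omega : M ≤ r) (3*n+2)
    have hc : (3*n+2)*r = r*(3*n+2) := by ring
    omega
  -- d and its bound
  set d := b - s with hd
  have hMd : M = r + (M - r) := by omega
  have hmul : (3*n+2)*(r + (M-r)) = (3*n+2)*r + (3*n+2)*(M-r) := by ring
  have hc : (3*n+2)*r = r*(3*n+2) := by ring
  have hc2 : (3*n+2)*(M-r) = (M-r)*(3*n+2) := by ring
  have hd_le : d ≤ (M - r)*(3*n+2) := by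
    rw [hMd] at hbM
    omega
  -- representability of d
  have hrep : ∃ A B C, d = 3*A + (3*n+1)*B + (3*n+2)*C := by
    by_cases hδ : L - M = 1
    · refine ⟨z2, z3, z4, ?_⟩
      rw [hδ, one_mul] at hba
      omega
    · have h2s : 2*s ≤ (L-M)*s := mul_le_mul_left (by omega : 2 ≤ L - M) s
      have hs1 : 1*(3*n+2) ≤ r*(3*n+2) := mul_le_mul_left (by omega : 1 ≤ r) (3*n+2)
      exact rep_exists n d (by omega)
  obtain ⟨a2, a3, a4, hval, hsum⟩ := rep_bound n (by omega) d hrep (M - r) hd_le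
  have hsum' : a2 + a3 + a4 ≤ M := by omega
  refine ⟨M - (a2+a3+a4), a2, a3, a4, ?_⟩
  have hb' : b = s + (3*a2+(3*n+1)*a3+(3*n+2)*a4) := by omega
  have hMT : M = (M - (a2+a3+a4)) + (a2+a3+a4) := by omega
  calc M*s + b = ((M - (a2+a3+a4)) + (a2+a3+a4))*s + (s + (3*a2+(3*n+1)*a3+(3*n+2)*a4)) := by
        rw [← hMT, ← hb']
    _ = s + ((M - (a2+a3+a4))*s + a2*(s+3) + a3*(s+3*n+1) + a4*(s+3*n+2)) := by ring

/-- For all integers `n ≥ 2` and `r ≥ 3n+2`, the Backelin numerical semigroup `Γ_{B_{nr}}`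
is homogeneous: any two representations of a nonzero element of the Apéry set
`Ap(Γ_{B_{nr}}, m₁)` in terms of the generators have the same total length. -/
theorem backelin_homogeneous (n r : ℕ) (hn : 2 ≤ n) (hr : 3 * n + 2 ≤ r)
    (s m1 m2 m3 m4 : ℕ)
    (hs : s = r * (3 * n + 2) + 3)
    (hm1 : m1 = s) (hm2 : m2 = s + 3) (hm3 : m3 = s + 3 * n + 1) (hm4 : m4 = s + 3 * n + 2)
    (Γ : Set ℕ)
    (hΓ : Γ = {x | ∃ z1 z2 z3 z4 : ℕ, x = z1 * m1 + z2 * m2 + z3 * m3 + z4 * m4})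
    (x : ℕ) (hxne : x ≠ 0) (hxΓ : x ∈ Γ)
    (hxAp : ¬ ∃ y ∈ Γ, (x : ℤ) - (m1 : ℤ) = (y : ℤ))
    (z1 z2 z3 z4 w1 w2 w3 w4 : ℕ)
    (hz : x = z1 * m1 + z2 * m2 + z3 * m3 + z4 * m4)
    (hw : x = w1 * m1 + w2 * m2 + w3 * m3 + w4 * m4) :
    z1 + z2 + z3 + z4 = w1 + w2 + w3 + w4 := by
  subst hm1 hm2 hm3 hm4 hΓ
  -- first coefficients vanish
  have hz1 : z1 = 0 := by
    by_contra h0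
    apply hxAp
    obtain ⟨k, rfl⟩ : ∃ k, z1 = k + 1 := ⟨z1 - 1, by omega⟩
    refine ⟨k * m1 + z2 * (m1 + 3) + z3 * (m1 + 3 * n + 1) + z4 * (m1 + 3 * n + 2),
      ⟨k, z2, z3, z4, rfl⟩, ?_⟩
    rw [hz]; push_cast; ring
  have hw1 : w1 = 0 := by
    by_contra h0
    apply hxAp
    obtain ⟨k, rfl⟩ : ∃ k, w1 = k + 1 := ⟨w1 - 1, by omega⟩
    refine ⟨k * m1 + w2 * (m1 + 3) + w3 * (m1 + 3 * n + 1) + w4 * (m1 + 3 * n + 2),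
      ⟨k, w2, w3, w4, rfl⟩, ?_⟩
    rw [hw]; push_cast; ring
  subst hz1 hw1
  have hx1 : x = (z2+z3+z4)*m1 + (3*z2+(3*n+1)*z3+(3*n+2)*z4) := by rw [hz]; ring
  have hx2 : x = (w2+w3+w4)*m1 + (3*w2+(3*n+1)*w3+(3*n+2)*w4) := by rw [hw]; ring
  have heq : (z2+z3+z4)*m1 + (3*z2+(3*n+1)*z3+(3*n+2)*z4)
      = (w2+w3+w4)*m1 + (3*w2+(3*n+1)*w3+(3*n+2)*w4) := hx1.symm.trans hx2
  rcases lt_trichotomy (z2+z3+z4) (w2+w3+w4) with h | h | h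
  · obtain ⟨a1, a2, a3, a4, hkey⟩ :=
      key_lemma n r m1 hn hr hs w2 w3 w4 z2 z3 z4 heq.symm h
    exfalso
    apply hxAp
    refine ⟨a1 * m1 + a2 * (m1 + 3) + a3 * (m1 + 3 * n + 1) + a4 * (m1 + 3 * n + 2),
      ⟨a1, a2, a3, a4, rfl⟩, ?_⟩
    have hxs : x = m1 + (a1*m1 + a2*(m1+3) + a3*(m1+3*n+1) + a4*(m1+3*n+2)) := hx1.trans hkey
    rw [hxs]; push_cast; ring
  · omega
  · obtain ⟨a1, a2, a3, a4, hkey⟩ :=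
      key_lemma n r m1 hn hr hs z2 z3 z4 w2 w3 w4 heq h
    exfalso
    apply hxAp
    refine ⟨a1 * m1 + a2 * (m1 + 3) + a3 * (m1 + 3 * n + 1) + a4 * (m1 + 3 * n + 2),
      ⟨a1, a2, a3, a4, rfl⟩, ?_⟩
    have hxs : x = m1 + (a1*m1 + a2*(m1+3) + a3*(m1+3*n+1) + a4*(m1+3*n+2)) := hx2.trans hkey
    rw [hxs]; push_cast; ring
end

section
/- For all integers n ≥ 2 and r ≥ 3n+2, the number r+1 is the least natural number c such that 1 + c·m₄ ∈ Γ_{B_{nr}}; that is, 1 + (r+1)(s+3n+2) ∈ Γ_{B_{nr}}, while 1 + c·(s+3n+2) ∉ Γ_{B_{nr}} for every natural number c ≤ r. -/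
/-- For all integers `n ≥ 2` and `r ≥ 3n+2`, the number `r + 1` is the least natural number
`c` such that `1 + c·m₄ ∈ Γ_{B_{nr}}`. -/
theorem backelin_least (n r : ℕ) (hn : 2 ≤ n) (hr : 3 * n + 2 ≤ r)
    (s m1 m2 m3 m4 : ℕ)
    (hs : s = r * (3 * n + 2) + 3)
    (hm1 : m1 = s) (hm2 : m2 = s + 3) (hm3 : m3 = s + 3 * n + 1) (hm4 : m4 = s + 3 * n + 2)
    (Γ : Set ℕ)
    (hΓ : Γ = {x | ∃ z1 z2 z3 z4 : ℕ, x = z1 * m1 + z2 * m2 + z3 * m3 + z4 * m4}) :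
    1 + (r + 1) * m4 ∈ Γ ∧ ∀ c : ℕ, c ≤ r → 1 + c * m4 ∉ Γ := by
  subst hs hm1 hm2 hm3 hm4 hΓ
  constructor
  · obtain ⟨k, hk⟩ : ∃ k, r + 2 = k + n := ⟨r + 2 - n, by omega⟩
    refine ⟨k, n, 0, 0, ?_⟩
    zify at hk ⊢
    linear_combination ((r : ℤ) * (3 * n + 2) + 3) * hk
  · rintro c hc ⟨z1, z2, z3, z4, h⟩
    rcases le_or_gt (z1 + z2 + z3 + z4) c with hac | hac
    · -- a ≤ c : excess part too small
      nlinarith [Nat.mul_le_mul_right (r * (3 * n + 2) + 3) hac,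
        Nat.mul_le_mul_left (3 * n + 2) hac]
    · -- c < a : a*s too big
      have h1 : (c + 1) * (r * (3 * n + 2) + 3) ≤
          (z1 + z2 + z3 + z4) * (r * (3 * n + 2) + 3) :=
        Nat.mul_le_mul_right _ hac
      have h2 : c * (3 * n + 2) ≤ r * (3 * n + 2) := Nat.mul_le_mul_right _ hc
      nlinarith [h1, h2]
end

section
/- Let h ≥ 2 be an integer and let φ : K[x₁,x₂,x₃,x₄] → K[t] be the K-algebra homomorphism with φ(x₁) = t^{a₁}, φ(x₂) = t^{a₂}, φ(x₃) = t^{a₃}, φ(x₄) = t^{a₄}, where a₁ = h(h+1), a₂ = h(h+1)+1, a₃ = (h+1)², a₄ = (h+1)²+1. Then the kernel of φ equals the ideal of K[x₁,x₂,x₃,x₄] generated by the polynomials w = x₁x₄ − x₂x₃; g_i = x₁^{h−i}x₃^{i+1} − x₂^{h−i+1}x₄^{i} for 0 ≤ i ≤ h; and q_j = x₃^{j}x₄^{h−j} − x₁^{j+1}x₂^{h−j} for 0 ≤ j ≤ h. -/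
open MvPolynomial

namespace ArslanAux

variable {K : Type*} [Field K]

noncomputable def mono (e1 e2 e3 e4 : ℕ) : MvPolynomial (Fin 4) K :=
  X 0 ^ e1 * X 1 ^ e2 * X 2 ^ e3 * X 3 ^ e4

def Gset (K : Type*) [Field K] (h : ℕ) : Set (MvPolynomial (Fin 4) K) :=
  {X 0 * X 3 - X 1 * X 2} ∪
    {g | ∃ i, i ≤ h ∧ g = X 0 ^ (h - i) * X 2 ^ (i + 1) - X 1 ^ (h - i + 1) * X 3 ^ i} ∪
    {g | ∃ j, j ≤ h ∧ g = X 2 ^ j * X 3 ^ (h - j) - X 0 ^ (j + 1) * X 1 ^ (h - j)}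

def val (h e1 e2 e3 e4 : ℕ) : ℕ :=
  e1 * (h * (h + 1)) + e2 * (h * (h + 1) + 1) + e3 * ((h + 1) ^ 2) + e4 * ((h + 1) ^ 2 + 1)

lemma move0 (h e1 e2 e3 e4 : ℕ) :
    (mono (e1 + 1) e2 e3 (e4 + 1) - mono e1 (e2 + 1) (e3 + 1) e4 : MvPolynomial (Fin 4) K)
      ∈ Ideal.span (Gset K h) := by
  have hw : (X 0 * X 3 - X 1 * X 2 : MvPolynomial (Fin 4) K) ∈ Gset K h :=
    Or.inl (Or.inl rfl)
  have he : (mono (e1 + 1) e2 e3 (e4 + 1) - mono e1 (e2 + 1) (e3 + 1) e4 : MvPolynomial (Fin 4) K)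
      = mono e1 e2 e3 e4 * (X 0 * X 3 - X 1 * X 2) := by
    unfold mono; ring
  rw [he]
  exact Ideal.mul_mem_left _ _ (Ideal.subset_span hw)

lemma move1 (h i k e1 e2 e3 e4 : ℕ) (hik : i + k = h) :
    (mono (e1 + k) e2 (e3 + (i + 1)) e4 - mono e1 (e2 + (k + 1)) e3 (e4 + i) :
      MvPolynomial (Fin 4) K) ∈ Ideal.span (Gset K h) := by
  have hk : h - i = k := by omega
  have hg : (X 0 ^ k * X 2 ^ (i + 1) - X 1 ^ (k + 1) * X 3 ^ i : MvPolynomial (Fin 4) K)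
      ∈ Gset K h := by
    refine Or.inl (Or.inr ⟨i, by omega, ?_⟩)
    rw [hk]
  have he : (mono (e1 + k) e2 (e3 + (i + 1)) e4 - mono e1 (e2 + (k + 1)) e3 (e4 + i) :
      MvPolynomial (Fin 4) K)
      = mono e1 e2 e3 e4 * (X 0 ^ k * X 2 ^ (i + 1) - X 1 ^ (k + 1) * X 3 ^ i) := by
    unfold mono; ring
  rw [he]
  exact Ideal.mul_mem_left _ _ (Ideal.subset_span hg)

lemma move2 (h j k e1 e2 e3 e4 : ℕ) (hjk : j + k = h) :
    (mono e1 e2 (e3 + j) (e4 + k) - mono (e1 + (j + 1)) (e2 + k) e3 e4 :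
      MvPolynomial (Fin 4) K) ∈ Ideal.span (Gset K h) := by
  have hk : h - j = k := by omega
  have hg : (X 2 ^ j * X 3 ^ k - X 0 ^ (j + 1) * X 1 ^ k : MvPolynomial (Fin 4) K)
      ∈ Gset K h := by
    refine Or.inr ⟨j, by omega, ?_⟩
    rw [hk]
  have he : (mono e1 e2 (e3 + j) (e4 + k) - mono (e1 + (j + 1)) (e2 + k) e3 e4 :
      MvPolynomial (Fin 4) K)
      = mono e1 e2 e3 e4 * (X 2 ^ j * X 3 ^ k - X 0 ^ (j + 1) * X 1 ^ k) := by
    unfold mono; ring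
  rw [he]
  exact Ideal.mul_mem_left _ _ (Ideal.subset_span hg)

def Std (h s1 s2 s3 s4 : ℕ) : Prop :=
  (s2 = 0 ∨ s3 = 0) ∧ s2 + s4 ≤ h ∧ s3 + s4 + 1 ≤ h


lemma val_move0 (h e1 e2 e3 e4 : ℕ) :
    val h (e1 + 1) e2 e3 (e4 + 1) = val h e1 (e2 + 1) (e3 + 1) e4 := by unfold val; ring

lemma val_move1 (i k e1 e2 e3 e4 : ℕ) :
    val (i + k) (e1 + k) e2 (e3 + (i + 1)) e4 = val (i + k) e1 (e2 + (k + 1)) e3 (e4 + i) := by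
  unfold val; ring

lemma val_move2 (j k e1 e2 e3 e4 : ℕ) :
    val (j + k) (e1 + (j + 1)) (e2 + k) e3 e4 = val (j + k) e1 e2 (e3 + j) (e4 + k) := by
  unfold val; ring

lemma nf (h : ℕ) (hh : 2 ≤ h) :
    ∀ N e1 e2 e3 e4, 2 * e2 + 2 * e3 + 3 * e4 ≤ N →
      ∃ s1 s2 s3 s4, Std h s1 s2 s3 s4 ∧ val h s1 s2 s3 s4 = val h e1 e2 e3 e4 ∧
        (mono e1 e2 e3 e4 - mono s1 s2 s3 s4 : MvPolynomial (Fin 4) K)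
          ∈ Ideal.span (Gset K h) := by
  intro N
  induction N with
  | zero =>
    intro e1 e2 e3 e4 hN
    have h2 : e2 = 0 := by omega
    have h3 : e3 = 0 := by omega
    have h4 : e4 = 0 := by omega
    subst h2; subst h3; subst h4
    exact ⟨e1, 0, 0, 0, ⟨Or.inl rfl, by omega, by omega⟩, rfl, by simp⟩
  | succ N ih =>
    intro e1 e2 e3 e4 hN
    by_cases h1 : h ≤ e3 + e4
    · -- apply move2 with j = min e3 h
      obtain ⟨j, k, hjk, hj3, hk4⟩ : ∃ j k, j + k = h ∧ j ≤ e3 ∧ k ≤ e4 :=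
        ⟨min e3 h, h - min e3 h, by omega, by omega, by omega⟩
      obtain ⟨c3, hc3⟩ : ∃ c3, e3 = c3 + j := ⟨e3 - j, by omega⟩
      obtain ⟨c4, hc4⟩ : ∃ c4, e4 = c4 + k := ⟨e4 - k, by omega⟩
      subst hc3; subst hc4
      obtain ⟨s1, s2, s3, s4, hstd, hval, hmem⟩ :=
        ih (e1 + (j + 1)) (e2 + k) c3 c4 (by omega)
      refine ⟨s1, s2, s3, s4, hstd, ?_, ?_⟩
      · rw [hval]
        have hv2 := val_move2 j k e1 e2 c3 c4
        rw [hjk] at hv2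
        exact hv2
      · have m1 := move2 (K := K) h j k e1 e2 c3 c4 hjk
        have heq : (mono e1 e2 (c3 + j) (c4 + k) - mono s1 s2 s3 s4 : MvPolynomial (Fin 4) K)
            = (mono e1 e2 (c3 + j) (c4 + k) - mono (e1 + (j + 1)) (e2 + k) c3 c4)
              + (mono (e1 + (j + 1)) (e2 + k) c3 c4 - mono s1 s2 s3 s4) := by ring
        rw [heq]; exact Ideal.add_mem _ m1 hmem
    · by_cases h2 : h + 1 ≤ e2 + e4
      · -- apply move1 with i = e4
        obtain ⟨i, k, hik, hk1, hie⟩ : ∃ i k, i + k = h ∧ 1 ≤ k ∧ i = e4 :=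
          ⟨e4, h - e4, by omega, by omega, rfl⟩
        subst hie
        obtain ⟨c2, hc2⟩ : ∃ c2, e2 = c2 + (k + 1) := ⟨e2 - (k + 1), by omega⟩
        subst hc2
        obtain ⟨s1, s2, s3, s4, hstd, hval, hmem⟩ :=
          ih (e1 + k) c2 (e3 + (i + 1)) 0 (by omega)
        refine ⟨s1, s2, s3, s4, hstd, ?_, ?_⟩
        · rw [hval]
          have hv1 := val_move1 i k e1 c2 e3 0
          rw [hik] at hv1
          rw [hv1]
          have : (0:ℕ) + i = i := by omega
          rw [this]
        · have m1 := move1 (K := K) h i k e1 c2 e3 0 hik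
          have heq : (mono e1 (c2 + (k + 1)) e3 i - mono s1 s2 s3 s4 : MvPolynomial (Fin 4) K)
              = (mono (e1 + k) c2 (e3 + (i + 1)) 0 - mono s1 s2 s3 s4)
                - (mono (e1 + k) c2 (e3 + (i + 1)) 0 - mono e1 (c2 + (k + 1)) e3 (0 + i)) := by
            norm_num
          rw [heq]; exact Ideal.sub_mem _ hmem m1
      · by_cases h3 : 1 ≤ e2 ∧ 1 ≤ e3
        · obtain ⟨c2, hc2⟩ : ∃ c2, e2 = c2 + 1 := ⟨e2 - 1, by omega⟩
          obtain ⟨c3, hc3⟩ : ∃ c3, e3 = c3 + 1 := ⟨e3 - 1, by omega⟩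
          subst hc2; subst hc3
          obtain ⟨s1, s2, s3, s4, hstd, hval, hmem⟩ :=
            ih (e1 + 1) c2 c3 (e4 + 1) (by omega)
          refine ⟨s1, s2, s3, s4, hstd, ?_, ?_⟩
          · rw [hval]; exact val_move0 h e1 c2 c3 e4
          · have m1 := move0 (K := K) h e1 c2 c3 e4
            have heq : (mono e1 (c2 + 1) (c3 + 1) e4 - mono s1 s2 s3 s4 : MvPolynomial (Fin 4) K)
                = (mono (e1 + 1) c2 c3 (e4 + 1) - mono s1 s2 s3 s4)
                  - (mono (e1 + 1) c2 c3 (e4 + 1) - mono e1 (c2 + 1) (c3 + 1) e4) := by ring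
            rw [heq]; exact Ideal.sub_mem _ hmem m1
        · refine ⟨e1, e2, e3, e4, ⟨by omega, by omega, by omega⟩, rfl, by simp⟩


lemma baseRep (A r q r' q' : ℕ) (h1 : r < A) (h2 : r' < A)
    (he : r + A * q = r' + A * q') : r = r' ∧ q = q' := by
  rcases le_total q q' with hq | hq
  · obtain ⟨u, rfl⟩ := Nat.exists_eq_add_of_le hq
    rw [Nat.mul_add] at he
    have hr : r = r' + A * u := by omega
    rcases Nat.eq_zero_or_pos u with rfl | hu
    · simp at hr ⊢; omega
    · have : A ≤ A * u := Nat.le_mul_of_pos_right A hu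
      omega
  · obtain ⟨u, rfl⟩ := Nat.exists_eq_add_of_le hq
    rw [Nat.mul_add] at he
    have hr : r' = r + A * u := by omega
    rcases Nat.eq_zero_or_pos u with rfl | hu
    · simp at hr ⊢; omega
    · have : A ≤ A * u := Nat.le_mul_of_pos_right A hu
      omega

-- the mixed-case contradiction
lemma mixedCase (h s2 s4 t3 t4 : ℕ) (hh : 2 ≤ h) (hs : s2 + s4 ≤ h) (ht3 : 1 ≤ t3)
    (ht : t3 + t4 + 1 ≤ h)
    (hm : s2 + (h + 2) * s4 = (h + 1) * t3 + (h + 2) * t4) : False := by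
  rcases le_or_gt (t3 + t4) s4 with hle | hlt
  · -- then LHS too big
    obtain ⟨u, rfl⟩ := Nat.exists_eq_add_of_le hle
    have hexp : (h + 2) * (t3 + t4 + u) = (h + 2) * t3 + (h + 2) * t4 + (h + 2) * u := by ring
    rw [hexp] at hm
    have h1 : (h + 2) * t3 = (h + 1) * t3 + t3 := by ring
    omega
  · obtain ⟨u, hu⟩ : ∃ u, t3 + t4 = s4 + (u + 1) := ⟨t3 + t4 - s4 - 1, by omega⟩
    have hexp : (h + 1) * t3 + (h + 2) * t4 + ((h + 2) * s4 + (h + 2) * (u + 1))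
        = (h + 1) * t3 + (h + 2) * t4 + (h + 2) * (t3 + t4) := by rw [hu]; ring
    have hexp2 : (h + 2) * (t3 + t4) = (h + 1) * t3 + (h + 2) * t4 + t3 := by ring
    -- so s2 + t3 = (h+2) * (u+1)
    have hst : s2 + t3 = (h + 2) * (u + 1) := by omega
    -- bounds: s2 ≤ h - s4, t3 ≤ t3 + t4 = s4 + u + 1
    have hb : s2 + t3 ≤ h + (u + 1) := by omega
    have : (h + 2) * (u + 1) = h * (u + 1) + 2 * (u + 1) := by ring
    have h2 : u + 1 ≤ h * (u + 1) := Nat.le_mul_of_pos_left (u + 1) (by omega)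
    have h3 : h ≤ h * (u + 1) := Nat.le_mul_of_pos_right h (by omega)
    omega


lemma mbound (h s2 s3 s4 : ℕ) (hh : 2 ≤ h) (h23 : s2 = 0 ∨ s3 = 0)
    (hb1 : s2 + s4 ≤ h) (hb2 : s3 + s4 + 1 ≤ h) :
    s2 + (h + 1) * s3 + (h + 2) * s4 < h * (h + 1) := by
  rcases h23 with h2 | h3
  · subst h2
    obtain ⟨v, hv⟩ : ∃ v, s3 + s4 + 1 + v = h := ⟨h - (s3 + s4 + 1), by omega⟩
    subst hv
    nlinarith [sq_nonneg s3, sq_nonneg s4]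
  · subst h3
    obtain ⟨v, hv⟩ : ∃ v, s4 + 1 + v = h := ⟨h - (s4 + 1), by omega⟩
    subst hv
    nlinarith [sq_nonneg s4]

lemma mInj (h s2 s3 s4 t2 t3 t4 : ℕ) (hh : 2 ≤ h)
    (hs23 : s2 = 0 ∨ s3 = 0) (hsb1 : s2 + s4 ≤ h) (hsb2 : s3 + s4 + 1 ≤ h)
    (ht23 : t2 = 0 ∨ t3 = 0) (htb1 : t2 + t4 ≤ h) (htb2 : t3 + t4 + 1 ≤ h)
    (hm : s2 + (h + 1) * s3 + (h + 2) * s4 = t2 + (h + 1) * t3 + (h + 2) * t4) :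
    s2 = t2 ∧ s3 = t3 ∧ s4 = t4 := by
  have case00 : ∀ u2 u4 v2 v4 : ℕ, u2 + u4 ≤ h → v2 + v4 ≤ h →
      u2 + (h + 2) * u4 = v2 + (h + 2) * v4 → u2 = v2 ∧ u4 = v4 := by
    intro u2 u4 v2 v4 hu hv he
    exact baseRep (h + 2) u2 u4 v2 v4 (by omega) (by omega) he
  have caseB : ∀ u3 u4 v3 v4 : ℕ, u3 + u4 + 1 ≤ h → v3 + v4 + 1 ≤ h →
      (h + 1) * u3 + (h + 2) * u4 = (h + 1) * v3 + (h + 2) * v4 →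
      u3 = v3 ∧ u4 = v4 := by
    intro u3 u4 v3 v4 hu hv he
    have e1 : (h + 1) * u3 + (h + 2) * u4 = u4 + (h + 1) * (u3 + u4) := by ring
    have e2 : (h + 1) * v3 + (h + 2) * v4 = v4 + (h + 1) * (v3 + v4) := by ring
    rw [e1, e2] at he
    obtain ⟨h1, h2⟩ := baseRep (h + 1) u4 (u3 + u4) v4 (v3 + v4) (by omega) (by omega) he
    omega
  rcases hs23 with hs2 | hs3
  · subst hs2
    rcases ht23 with ht2 | ht3
    · subst ht2
      rcases Nat.eq_zero_or_pos s3 with hs3 | hs3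
      · rcases Nat.eq_zero_or_pos t3 with ht3 | ht3
        · subst hs3; subst ht3
          have h2 := hm
          simp only [Nat.mul_zero, Nat.add_zero, Nat.zero_add] at h2
          have hs4 : s4 = t4 := by
            first
            | exact h2
            | exact Nat.eq_of_mul_eq_mul_left (by omega) h2
          exact ⟨rfl, rfl, hs4⟩
        · exfalso
          subst hs3
          refine mixedCase h 0 s4 t3 t4 hh (by omega) ht3 htb2 ?_
          omega
      · rcases Nat.eq_zero_or_pos t3 with ht3 | ht3
        · exfalso
          subst ht3
          refine mixedCase h 0 t4 s3 s4 hh (by omega) hs3 hsb2 ?_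
          omega
        · obtain ⟨h1, h2⟩ := caseB s3 s4 t3 t4 hsb2 htb2 (by omega)
          omega
    · subst ht3
      rcases Nat.eq_zero_or_pos s3 with hs3 | hs3
      · subst hs3
        obtain ⟨h1, h2⟩ := case00 0 s4 t2 t4 (by omega) htb1 (by omega)
        omega
      · exfalso
        refine mixedCase h t2 t4 s3 s4 hh htb1 hs3 hsb2 ?_
        omega
  · subst hs3
    rcases ht23 with ht2 | ht3
    · subst ht2
      rcases Nat.eq_zero_or_pos t3 with ht3 | ht3
      · subst ht3
        obtain ⟨h1, h2⟩ := case00 s2 s4 0 t4 hsb1 (by omega) (by omega)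
        omega
      · exfalso
        refine mixedCase h s2 s4 t3 t4 hh hsb1 ht3 htb2 ?_
        omega
    · subst ht3
      obtain ⟨h1, h2⟩ := case00 s2 s4 t2 t4 hsb1 htb1 (by omega)
      omega

lemma uniq (h : ℕ) (hh : 2 ≤ h) (s1 s2 s3 s4 t1 t2 t3 t4 : ℕ)
    (hs : Std h s1 s2 s3 s4) (ht : Std h t1 t2 t3 t4)
    (hv : val h s1 s2 s3 s4 = val h t1 t2 t3 t4) :
    s1 = t1 ∧ s2 = t2 ∧ s3 = t3 ∧ s4 = t4 := by
  obtain ⟨hs23, hsb1, hsb2⟩ := hs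
  obtain ⟨ht23, htb1, htb2⟩ := ht
  have hdec : ∀ e1 e2 e3 e4 : ℕ, val h e1 e2 e3 e4
      = (e2 + (h + 1) * e3 + (h + 2) * e4) + (h * (h + 1)) * (e1 + e2 + e3 + e4) := by
    intro e1 e2 e3 e4; unfold val; ring
  rw [hdec, hdec] at hv
  have hm1 := mbound h s2 s3 s4 hh hs23 hsb1 hsb2
  have hm2 := mbound h t2 t3 t4 hh ht23 htb1 htb2
  obtain ⟨hm, hd⟩ := baseRep (h * (h + 1)) _ _ _ _ hm1 hm2 hv
  obtain ⟨e2, e3, e4⟩ := mInj h s2 s3 s4 t2 t3 t4 hh hs23 hsb1 hsb2 ht23 htb1 htb2 hm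
  exact ⟨by omega, e2, e3, e4⟩



lemma KL (h : ℕ) (hh : 2 ≤ h) (e1 e2 e3 e4 f1 f2 f3 f4 : ℕ)
    (hv : val h e1 e2 e3 e4 = val h f1 f2 f3 f4) :
    (mono e1 e2 e3 e4 - mono f1 f2 f3 f4 : MvPolynomial (Fin 4) K)
      ∈ Ideal.span (Gset K h) := by
  obtain ⟨s1, s2, s3, s4, hstd, hval, hmem⟩ :=
    nf (K := K) h hh (2 * e2 + 2 * e3 + 3 * e4) e1 e2 e3 e4 le_rfl
  obtain ⟨t1, t2, t3, t4, htstd, htval, htmem⟩ :=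
    nf (K := K) h hh (2 * f2 + 2 * f3 + 3 * f4) f1 f2 f3 f4 le_rfl
  obtain ⟨q1, q2, q3, q4⟩ := uniq h hh s1 s2 s3 s4 t1 t2 t3 t4 hstd htstd
    (by rw [hval, hv, ← htval])
  subst q1; subst q2; subst q3; subst q4
  have heq : (mono e1 e2 e3 e4 - mono f1 f2 f3 f4 : MvPolynomial (Fin 4) K)
      = (mono e1 e2 e3 e4 - mono s1 s2 s3 s4) - (mono f1 f2 f3 f4 - mono s1 s2 s3 s4) := by
    ring
  rw [heq]
  exact Ideal.sub_mem _ hmem htmem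

def V (h : ℕ) (d : Fin 4 →₀ ℕ) : ℕ := val h (d 0) (d 1) (d 2) (d 3)

lemma monomial_eq_mono (d : Fin 4 →₀ ℕ) :
    (monomial d (1 : K)) = mono (d 0) (d 1) (d 2) (d 3) := by
  rw [monomial_eq, C_1, one_mul,
    Finsupp.prod_fintype _ _ (fun i => pow_zero _), Fin.prod_univ_four]
  rfl

lemma KLf (h : ℕ) (hh : 2 ≤ h) (d d' : Fin 4 →₀ ℕ) (hv : V h d = V h d') :
    (monomial d (1 : K) - monomial d' 1) ∈ Ideal.span (Gset K h) := by
  rw [monomial_eq_mono, monomial_eq_mono]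
  exact KL h hh _ _ _ _ _ _ _ _ hv

lemma aeval_mono (A B C D e1 e2 e3 e4 : ℕ) :
    aeval ![(Polynomial.X : Polynomial K) ^ A, Polynomial.X ^ B, Polynomial.X ^ C,
        Polynomial.X ^ D] (mono e1 e2 e3 e4 : MvPolynomial (Fin 4) K)
      = Polynomial.X ^ (e1 * A + e2 * B + e3 * C + e4 * D) := by
  simp only [mono, map_mul, map_pow, aeval_X, Matrix.cons_val_zero, Matrix.cons_val_one,
    Matrix.head_cons, Matrix.cons_val_two, Matrix.tail_cons, Matrix.cons_val_three]
  rw [← pow_mul, ← pow_mul, ← pow_mul, ← pow_mul, ← pow_add, ← pow_add, ← pow_add]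
  congr 1
  ring


lemma kerIncl (h : ℕ) (hh : 2 ≤ h) (φ : MvPolynomial (Fin 4) K →ₐ[K] Polynomial K)
    (hphi : ∀ (d : Fin 4 →₀ ℕ) (c : K),
      φ (monomial d c) = Polynomial.C c * Polynomial.X ^ V h d)
    (hspan : ∀ g ∈ Ideal.span (Gset K h), φ g = 0) :
    ∀ N (f : MvPolynomial (Fin 4) K), f.support.card ≤ N → φ f = 0 →
      f ∈ Ideal.span (Gset K h) := by
  intro N
  induction N with
  | zero =>
    intro f hc _
    have h0 : f = 0 := support_eq_empty.mp (Finset.card_eq_zero.mp (Nat.le_zero.mp hc))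
    rw [h0]; exact Ideal.zero_mem _
  | succ N ih =>
    intro f hc hf
    rcases eq_or_ne f 0 with rfl | hf0
    · exact Ideal.zero_mem _
    obtain ⟨d0, hd0⟩ : f.support.Nonempty :=
      Finset.nonempty_iff_ne_empty.mpr (fun hem => hf0 (support_eq_empty.mp hem))
    set n0 := V h d0 with hn0
    set T := f.support.filter (fun d => V h d = n0) with hT
    have hd0T : d0 ∈ T := Finset.mem_filter.mpr ⟨hd0, rfl⟩
    have hphif : φ f = ∑ d ∈ f.support, Polynomial.C (coeff d f) * Polynomial.X ^ V h d := by
      conv_lhs => rw [f.as_sum]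
      rw [map_sum]
      exact Finset.sum_congr rfl fun d _ => hphi d _
    have hcsum : ∑ d ∈ T, coeff d f = 0 := by
      have h0 : (φ f).coeff n0 = 0 := by rw [hf]; simp
      rw [hphif, Polynomial.finset_sum_coeff] at h0
      have hterm : ∀ d, (Polynomial.C (coeff d f) * Polynomial.X ^ V h d).coeff n0
          = if V h d = n0 then coeff d f else 0 := by
        intro d
        rw [Polynomial.coeff_C_mul, Polynomial.coeff_X_pow]
        by_cases hd : V h d = n0
        · simp [hd]
        · simp [hd, Ne.symm hd]
      rw [Finset.sum_congr rfl fun d _ => hterm d] at h0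
      rw [hT, Finset.sum_filter]
      exact h0
    set g : MvPolynomial (Fin 4) K := ∑ d ∈ T, monomial d (coeff d f) with hg
    have hgspan : g ∈ Ideal.span (Gset K h) := by
      have key : ∑ d ∈ T, C (coeff d f) * (monomial d (1 : K) - monomial d0 1)
          = g - ∑ d ∈ T, monomial d0 (coeff d f) := by
        rw [← Finset.sum_sub_distrib]
        exact Finset.sum_congr rfl fun d _ => by
          simp [mul_sub, C_mul_monomial]
      have key2 : ∑ d ∈ T, (monomial d0 (coeff d f) : MvPolynomial (Fin 4) K)
          = monomial d0 (∑ d ∈ T, coeff d f) := (map_sum (monomial d0) _ _).symm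
      have hgsum : g = ∑ d ∈ T, C (coeff d f) * (monomial d (1 : K) - monomial d0 1) := by
        rw [key, key2, hcsum, monomial_zero, sub_zero]
      rw [hgsum]
      refine Ideal.sum_mem _ fun d hd => ?_
      have hVd : V h d = V h d0 := (Finset.mem_filter.mp hd).2
      exact Ideal.mul_mem_left _ _ (KLf h hh d d0 hVd)
    have hcoeffg : ∀ d, coeff d g = if d ∈ T then coeff d f else 0 := by
      intro d
      rw [hg, coeff_sum]
      simp only [coeff_monomial]
      rw [Finset.sum_ite_eq' T d (fun e => coeff e f)]
    have hsupp2 : (f - g).support ⊆ f.support \ T := by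
      intro d hd
      rw [mem_support_iff, coeff_sub, hcoeffg d] at hd
      rw [Finset.mem_sdiff]
      by_cases hdT : d ∈ T
      · simp [hdT] at hd
      · simp only [hdT, if_false, sub_zero] at hd
        exact ⟨mem_support_iff.mpr hd, hdT⟩
    have hcard : (f - g).support.card ≤ N := by
      have h1 := Finset.card_le_card hsupp2
      have h2 : (f.support \ T).card = f.support.card - T.card :=
        Finset.card_sdiff_of_subset (Finset.filter_subset _ _)
      have h3 : 1 ≤ T.card := Finset.card_pos.mpr ⟨d0, hd0T⟩
      omega
    have hfg : φ (f - g) = 0 := by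
      rw [map_sub, hf, hspan g hgspan, sub_zero]
    have hmem := ih (f - g) hcard hfg
    have hfe : f = (f - g) + g := by ring
    rw [hfe]
    exact Ideal.add_mem _ hmem hgspan

end ArslanAux

open ArslanAux in
/-- For `h ≥ 2`, the kernel of the `K`-algebra map `K[x₁,x₂,x₃,x₄] → K[t]`,
`xᵢ ↦ t^{aᵢ}` with `a₁ = h(h+1)`, `a₂ = h(h+1)+1`, `a₃ = (h+1)²`, `a₄ = (h+1)²+1`,
is the ideal generated by `w`, the `gᵢ` and the `qⱼ` of Arslan. -/
theorem arslan_defining_ideal (K : Type*) [Field K] (h : ℕ) (hh : 2 ≤ h)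
    (a1 a2 a3 a4 : ℕ)
    (ha1 : a1 = h * (h + 1)) (ha2 : a2 = h * (h + 1) + 1)
    (ha3 : a3 = (h + 1) ^ 2) (ha4 : a4 = (h + 1) ^ 2 + 1)
    (φ : MvPolynomial (Fin 4) K →ₐ[K] Polynomial K)
    (hφ : φ = aeval ![Polynomial.X ^ a1, Polynomial.X ^ a2,
      Polynomial.X ^ a3, Polynomial.X ^ a4]) :
    RingHom.ker (φ : MvPolynomial (Fin 4) K →+* Polynomial K) =
      Ideal.span
        ({X 0 * X 3 - X 1 * X 2} ∪
          {g | ∃ i, i ≤ h ∧ g = X 0 ^ (h - i) * X 2 ^ (i + 1) - X 1 ^ (h - i + 1) * X 3 ^ i} ∪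
          {g | ∃ j, j ≤ h ∧ g = X 2 ^ j * X 3 ^ (h - j) - X 0 ^ (j + 1) * X 1 ^ (h - j)}) := by
  subst ha1; subst ha2; subst ha3; subst ha4
  have hGset : ({X 0 * X 3 - X 1 * X 2} ∪
      {g | ∃ i, i ≤ h ∧ g = X 0 ^ (h - i) * X 2 ^ (i + 1) - X 1 ^ (h - i + 1) * X 3 ^ i} ∪
      {g | ∃ j, j ≤ h ∧ g = X 2 ^ j * X 3 ^ (h - j) - X 0 ^ (j + 1) * X 1 ^ (h - j)} :
        Set (MvPolynomial (Fin 4) K)) = Gset K h := rfl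
  rw [hGset]
  -- φ of a monomial
  have hphi : ∀ (d : Fin 4 →₀ ℕ) (c : K),
      φ (monomial d c) = Polynomial.C c * Polynomial.X ^ V h d := by
    intro d c
    have hmc : (monomial d c : MvPolynomial (Fin 4) K) = C c * monomial d 1 := by
      rw [C_mul_monomial, mul_one]
    rw [hmc, map_mul, hφ, aeval_C, monomial_eq_mono, aeval_mono,
      ← Polynomial.C_eq_algebraMap]
    rfl
  -- the ideal is contained in the kernel
  have hspan : ∀ g ∈ Ideal.span (Gset K h), φ g = 0 := by
    have hgen : ∀ g ∈ Gset K h, φ g = 0 := by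
      rintro g ((hg | ⟨i, hi, rfl⟩) | ⟨j, hj, rfl⟩)
      · rw [Set.mem_singleton_iff] at hg
        subst hg
        rw [hφ]
        simp only [map_sub, map_mul, aeval_X, Matrix.cons_val_zero, Matrix.cons_val_one,
          Matrix.head_cons, Matrix.cons_val_two, Matrix.tail_cons, Matrix.cons_val_three]
        rw [← pow_add, ← pow_add]
        have hE : h * (h + 1) + ((h + 1) ^ 2 + 1) = h * (h + 1) + 1 + (h + 1) ^ 2 := by ring
        rw [hE, sub_self]
      · obtain ⟨k, hik⟩ : ∃ k, i + k = h := ⟨h - i, by omega⟩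
        have hk : h - i = k := by omega
        rw [hφ]
        simp only [map_sub, map_mul, map_pow, aeval_X, Matrix.cons_val_zero, Matrix.cons_val_one,
          Matrix.head_cons, Matrix.cons_val_two, Matrix.tail_cons, Matrix.cons_val_three]
        rw [hk, ← pow_mul, ← pow_mul, ← pow_mul, ← pow_mul, ← pow_add, ← pow_add]
        have hE : h * (h + 1) * k + (h + 1) ^ 2 * (i + 1)
            = (h * (h + 1) + 1) * (k + 1) + ((h + 1) ^ 2 + 1) * i := by
          rw [← hik]; ring
        rw [hE, sub_self]
      · obtain ⟨k, hjk⟩ : ∃ k, j + k = h := ⟨h - j, by omega⟩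
        have hk : h - j = k := by omega
        rw [hφ]
        simp only [map_sub, map_mul, map_pow, aeval_X, Matrix.cons_val_zero, Matrix.cons_val_one,
          Matrix.head_cons, Matrix.cons_val_two, Matrix.tail_cons, Matrix.cons_val_three]
        rw [hk, ← pow_mul, ← pow_mul, ← pow_mul, ← pow_mul, ← pow_add, ← pow_add]
        have hE : (h + 1) ^ 2 * j + ((h + 1) ^ 2 + 1) * k
            = h * (h + 1) * (j + 1) + (h * (h + 1) + 1) * k := by
          rw [← hjk]; ring
        rw [hE, sub_self]
    intro g hg
    refine Submodule.span_induction ?_ ?_ ?_ ?_ hg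
    · exact hgen
    · exact map_zero φ
    · intro x y _ _ hx hy; rw [map_add, hx, hy, add_zero]
    · intro r x _ hx; rw [smul_eq_mul, map_mul, hx, mul_zero]
  apply le_antisymm
  · intro f hf
    rw [RingHom.mem_ker] at hf
    exact kerIncl h hh φ hphi hspan f.support.card f le_rfl hf
  · rw [Ideal.span_le]
    intro g hg
    rw [SetLike.mem_coe, RingHom.mem_ker]
    exact hspan g (Ideal.subset_span hg)
end

section
/- Let K, n₁ < ⋯ < n_e, Γ̄ and R ⊆ K[v,u] be as in the context. Let h₂ ≥ 1 and suppose β₁,…,β_{h₂} and α₁,…,α_{h₂} are positive integers such that for each i, (βᵢ + n, (αᵢ − 1) + n_e − n) ∈ Γ̄ for every n ∈ {0, n₁, …, n_{e−1}}. Then the R-submodule of K[v,u] generated by {u, v^{β₁}u^{α₁}, …, v^{β_{h₂}}u^{α_{h₂}}} is isomorphic, as an R-module, to the ideal of R generated by {u^{n_e}, v^{β₁}u^{α₁−1+n_e}, …, v^{β_{h₂}}u^{α_{h₂}−1+n_e}}. -/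
open MvPolynomial

set_option synthInstance.maxHeartbeats 1000000
set_option maxHeartbeats 1000000

/-- The `R`-module generated by `{u, v^{βᵢ}u^{αᵢ}}` is isomorphic, as an `R`-module, to the
ideal of `R` generated by `{u^{n_e}, v^{βᵢ}u^{αᵢ−1+n_e}}` (viewed as the `R`-submodule of
`K[v,u]` these elements generate). Here `v = X 0` and `u = X 1`. -/
theorem D1_iso_ideal (K : Type*) [Field K] (e : ℕ) (he : 2 ≤ e)
    (n : ℕ → ℕ) (hn1 : 0 < n 1)
    (hmono : ∀ i j, 1 ≤ i → i < j → j ≤ e → n i < n j)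
    (hgcd : (Finset.Icc 1 e).gcd n = 1)
    (Γ : AddSubmonoid (ℕ × ℕ))
    (hΓ : Γ = AddSubmonoid.closure
      (insert (0, n e) (insert (n e, 0)
        {p | ∃ i, 1 ≤ i ∧ i ≤ e - 1 ∧ p = (n i, n e - n i)})))
    (R : Subalgebra K (MvPolynomial (Fin 2) K))
    (hR : R = Algebra.adjoin K
      (insert (X 1 ^ n e) (insert ((X 0 : MvPolynomial (Fin 2) K) ^ n e)
        {q | ∃ i, 1 ≤ i ∧ i ≤ e - 1 ∧ q = X 0 ^ n i * X 1 ^ (n e - n i)})))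
    (h2 : ℕ) (hh2 : 1 ≤ h2)
    (β α : ℕ → ℕ)
    (hβ : ∀ i, 1 ≤ i → i ≤ h2 → 0 < β i) (hα : ∀ i, 1 ≤ i → i ≤ h2 → 0 < α i)
    (hmem : ∀ i, 1 ≤ i → i ≤ h2 → ∀ m : ℕ,
      (m = 0 ∨ ∃ k, 1 ≤ k ∧ k ≤ e - 1 ∧ m = n k) →
      (β i + m, (α i - 1) + n e - m) ∈ Γ) :
    Nonempty (
      (Submodule.span ↥R
        (insert (X 1 : MvPolynomial (Fin 2) K)
          {q | ∃ i, 1 ≤ i ∧ i ≤ h2 ∧ q = X 0 ^ β i * X 1 ^ α i}) :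
        Submodule ↥R (MvPolynomial (Fin 2) K)) ≃ₗ[↥R]
      (Submodule.span ↥R
        (insert ((X 1 : MvPolynomial (Fin 2) K) ^ n e)
          {q | ∃ i, 1 ≤ i ∧ i ≤ h2 ∧ q = X 0 ^ β i * X 1 ^ (α i - 1 + n e)}) :
        Submodule ↥R (MvPolynomial (Fin 2) K))) := by
  have hne : 0 < n e := hn1.trans (hmono 1 e le_rfl (by omega) le_rfl)
  have hc0 : (X 1 ^ (n e - 1) : MvPolynomial (Fin 2) K) ≠ 0 := pow_ne_zero _ (X_ne_zero 1)
  let f : MvPolynomial (Fin 2) K →ₗ[↥R] MvPolynomial (Fin 2) K :=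
    LinearMap.mulLeft ↥R (X 1 ^ (n e - 1))
  have hf : Function.Injective f := fun a b h => mul_left_cancel₀ hc0 h
  refine ⟨(Submodule.equivMapOfInjective f hf _).trans (LinearEquiv.ofEq _ _ ?_)⟩
  rw [Submodule.map_span]
  congr 1
  rw [Set.image_insert_eq]
  congr 1
  · show (X 1 ^ (n e - 1) : MvPolynomial (Fin 2) K) * X 1 = X 1 ^ n e
    rw [← pow_succ]
    congr 1; omega
  · ext q
    constructor
    · rintro ⟨q', ⟨i, h1, h2', rfl⟩, rfl⟩
      refine ⟨i, h1, h2', ?_⟩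
      show (X 1 ^ (n e - 1) : MvPolynomial (Fin 2) K) * (X 0 ^ β i * X 1 ^ α i)
        = X 0 ^ β i * X 1 ^ (α i - 1 + n e)
      have h : α i - 1 + n e = (n e - 1) + α i := by have := hα i h1 h2'; omega
      rw [h, pow_add]; ring
    · rintro ⟨i, h1, h2', rfl⟩
      refine ⟨X 0 ^ β i * X 1 ^ α i, ⟨i, h1, h2', rfl⟩, ?_⟩
      show (X 1 ^ (n e - 1) : MvPolynomial (Fin 2) K) * (X 0 ^ β i * X 1 ^ α i)
        = X 0 ^ β i * X 1 ^ (α i - 1 + n e)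
      have h : α i - 1 + n e = (n e - 1) + α i := by have := hα i h1 h2'; omega
      rw [h, pow_add]; ring
end
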